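/- arXiv:2601.15694 — 13 statements merged into one kernel-verified Lean document; each statement's English description precedes it below -/
import Mathlib

section
/- Let G be a locally compact Hausdorff topological group. Then the following are equivalent: (i) G is second countable; (ii) G is σ-compact and first countable; (iii) the set G \ {1_G} is σ-compact, i.e. a countable union of compact subsets of G. -/
/-!
A first countable group is pseudometrizable (Birkhoff–Kakutani), and a σ-compact
pseudometrizable space is second countable. Conversely, if `G \ {1} = ⋃ Kₙ` with `Kₙ` compact,
then `G` is σ-compact and `{1} = ⋂ Kₙᶜ` is a `G_δ`. Choosing closed neighbourhoods `Fₙ ⊆ Kₙᶜ`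
of `1` and a compact neighbourhood `C`, compactness of `C` shows that the finite intersections
`C ∩ F_{n₁} ∩ ⋯ ∩ F_{nₖ}` form a neighbourhood basis of `1`, so `G` is first countable.
-/

open Filter Set Topology Uniformity

section

variable {X : Type*} [TopologicalSpace X]

theorem nhds_eq_principal_inf_iInf_principal {ι : Type*} {x : X} {C : Set X} {F : ι → Set X}
    (hC : IsCompact C) (hCx : C ∈ 𝓝 x) (hF : ∀ i, IsClosed (F i)) (hFx : ∀ i, F i ∈ 𝓝 x)
    (hCF : C ∩ ⋂ i, F i ⊆ {x}) :
    𝓝 x = 𝓟 C ⊓ ⨅ i, 𝓟 (F i) := by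
  refine le_antisymm (le_inf (le_principal_iff.2 hCx) (le_iInf fun i ↦ le_principal_iff.2 (hFx i)))
    ((nhds_basis_opens x).ge_iff.2 fun U ⟨hxU, hUo⟩ ↦ ?_)
  have hempty : (C \ U) ∩ ⋂ i, F i = ∅ := by
    rw [sdiff_eq, inter_right_comm, ← sdiff_eq, sdiff_eq_empty]
    exact hCF.trans (singleton_subset_iff.2 hxU)
  obtain ⟨u, hu⟩ := (hC.diff hUo).elim_finite_subfamily_closed F hF hempty
  have hFu : ⋂ i ∈ u, F i ∈ ⨅ i, 𝓟 (F i) :=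
    (biInter_finset_mem u).2 fun i _ ↦ mem_iInf_of_mem i (mem_principal_self _)
  refine mem_of_superset (inter_mem_inf (mem_principal_self C) hFu) fun y ⟨hyC, hyF⟩ ↦ ?_
  by_contra hyU
  exact hu.subset ⟨⟨hyC, hyU⟩, hyF⟩

theorem IsGδ.isCountablyGenerated_nhds [WeaklyLocallyCompactSpace X] [RegularSpace X] {x : X}
    (h : IsGδ {x}) : (𝓝 x).IsCountablyGenerated := by
  obtain ⟨U, hUo, hU⟩ := isGδ_iff_eq_iInter_nat.1 h
  have hxU : ∀ n, U n ∈ 𝓝 x := fun n ↦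
    (hUo n).mem_nhds (mem_iInter.1 (hU ▸ mem_singleton x) n)
  choose F hFx hFc hFU using fun n ↦ exists_mem_nhds_isClosed_subset (hxU n)
  obtain ⟨C, hC, hCx⟩ := exists_compact_mem_nhds x
  rw [nhds_eq_principal_inf_iInf_principal hC hCx hFc hFx
    (inter_subset_right.trans (hU ▸ iInter_mono hFU))]
  infer_instance

theorem IsSigmaCompact.isGδ_compl [T2Space X] {s : Set X} (hs : IsSigmaCompact s) : IsGδ sᶜ := by
  obtain ⟨K, hK, rfl⟩ := hs
  rw [compl_iUnion]
  exact .iInter_of_isOpen fun n ↦ (hK n).isClosed.isOpen_compl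

theorem SigmaCompactSpace.of_isSigmaCompact_compl_singleton {x : X} (h : IsSigmaCompact {x}ᶜ) :
    SigmaCompactSpace X := by
  obtain ⟨K, hK, hKx⟩ := h
  refine ⟨⟨fun n ↦ K n ∪ {x}, fun n ↦ (hK n).union isCompact_singleton, ?_⟩⟩
  rw [← iUnion_union, hKx, compl_union_self]

theorem IsOpen.isSigmaCompact [LocallyCompactSpace X] [SecondCountableTopology X] {U : Set X}
    (hU : IsOpen U) : IsSigmaCompact U :=
  have := hU.locallyCompactSpace
  isSigmaCompact_iff_sigmaCompactSpace.2 inferInstance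

end

namespace IsTopologicalGroup

variable {G : Type*} [Group G] [TopologicalSpace G] [IsTopologicalGroup G]

theorem firstCountableTopology_of_isCountablyGenerated_nhds_one
    (h : (𝓝 (1 : G)).IsCountablyGenerated) : FirstCountableTopology G where
  nhds_generated_countable a := by
    rw [← nhds_translation_mul_inv a]
    exact comap.isCountablyGenerated _ _

theorem secondCountableTopology_of_sigmaCompactSpace [SigmaCompactSpace G]
    [FirstCountableTopology G] : SecondCountableTopology G := by
  let : UniformSpace G := rightUniformSpace G
  have : (𝓤 G).IsCountablyGenerated := by
    rw [uniformity_eq_comap_nhds_one']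
    exact comap.isCountablyGenerated _ _
  have : TopologicalSpace.PseudoMetrizableSpace G := UniformSpace.pseudoMetrizableSpace
  let := TopologicalSpace.pseudoMetrizableSpacePseudoMetric G
  exact EMetric.secondCountable_of_sigmaCompact G

end IsTopologicalGroup

/-- For a locally compact Hausdorff topological group `G`, the following are
equivalent: (i) `G` is second countable; (ii) `G` is σ-compact and first countable;
(iii) `G \ {1}` is σ-compact, i.e. a countable union of compact subsets. -/
theorem secondCountable_iff_sigmaCompact_firstCountable_iff_compl_one_sigmaCompact
    {G : Type*} [Group G] [TopologicalSpace G] [IsTopologicalGroup G]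
    [LocallyCompactSpace G] [T2Space G] :
    (SecondCountableTopology G ↔
      (SigmaCompactSpace G ∧ FirstCountableTopology G)) ∧
    (SecondCountableTopology G ↔
      ∃ K : ℕ → Set G, (∀ n, IsCompact (K n)) ∧ (⋃ n, K n) = {(1 : G)}ᶜ) := by
  have h12 : SecondCountableTopology G ↔ SigmaCompactSpace G ∧ FirstCountableTopology G :=
    ⟨fun _ ↦ ⟨inferInstance, inferInstance⟩, fun ⟨_, _⟩ ↦
      IsTopologicalGroup.secondCountableTopology_of_sigmaCompactSpace⟩
  refine ⟨h12, fun _ ↦ isOpen_compl_singleton.isSigmaCompact,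
    fun (h : IsSigmaCompact {(1 : G)}ᶜ) ↦ h12.2 ⟨.of_isSigmaCompact_compl_singleton h, ?_⟩⟩
  have h1 : IsGδ {(1 : G)} := by simpa using h.isGδ_compl
  exact IsTopologicalGroup.firstCountableTopology_of_isCountablyGenerated_nhds_one
    h1.isCountablyGenerated_nhds
end

section
/- Let G be a second countable locally compact Hausdorff topological group. Then G is residually compact if and only if there exists a sequence (G_n)_{n∈ℕ} of closed cocompact subgroups of G with ⋂_{n∈ℕ} G_n = {1_G}. -/
open Pointwise

/-- A subgroup `H` of a topological group `G` is *cocompact* if there is a compact set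
`K ⊆ G` with `G = K * H`. -/
def IsCocompactSubgroup {G : Type*} [Group G] [TopologicalSpace G] (H : Subgroup G) : Prop :=
  ∃ K : Set G, IsCompact K ∧ K * (H : Set G) = Set.univ

/-- A topological group `G` is *residually compact* if every `g ≠ 1` lies outside some
closed cocompact subgroup of `G`. -/
def ResiduallyCompactGroup (G : Type*) [Group G] [TopologicalSpace G] : Prop :=
  ∀ g : G, g ≠ 1 → ∃ H : Subgroup G, IsClosed (H : Set G) ∧ IsCocompactSubgroup H ∧ g ∉ H

/-!
Residual compactness says that the closed cocompact subgroups intersect in `{1}`. Their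
complements are open, so in a second countable (hence hereditarily Lindelöf) group countably
many of them already cover `G \ {1}`; the subgroup `⊤` makes the family nonempty, so these
countably many subgroups can be enumerated by `ℕ`.
-/

lemma exists_nat_iInter_eq_of_isClosed {X ι : Type*} [TopologicalSpace X]
    [HereditarilyLindelofSpace X] [Nonempty ι] (F : ι → Set X) (hF : ∀ i, IsClosed (F i)) :
    ∃ k : ℕ → ι, ⋂ n, F (k n) = ⋂ i, F i := by
  obtain ⟨k, hk⟩ := eq_open_union_nat (fun i ↦ (F i)ᶜ) fun i ↦ (hF i).isOpen_compl
  exact ⟨k, compl_injective (by simpa only [Set.compl_iInter] using hk)⟩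

abbrev ClosedCocompactSubgroup (G : Type*) [Group G] [TopologicalSpace G] :=
  {H : Subgroup G // IsClosed (H : Set G) ∧ IsCocompactSubgroup H}

section

variable {G : Type*} [Group G] [TopologicalSpace G]

lemma isCocompactSubgroup_top : IsCocompactSubgroup (⊤ : Subgroup G) :=
  ⟨{1}, isCompact_singleton, by simp⟩

lemma ResiduallyCompactGroup.iInter_closedCocompactSubgroup_eq (hG : ResiduallyCompactGroup G) :
    ⋂ H : ClosedCocompactSubgroup G, (H.1 : Set G) = {1} := by
  refine Set.Subset.antisymm (fun g hg ↦ ?_) ?_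
  · by_contra hg1
    obtain ⟨H, hHc, hHcc, hgH⟩ := hG g hg1
    exact hgH (Set.mem_iInter.1 hg ⟨H, hHc, hHcc⟩)
  · simp only [Set.singleton_subset_iff, Set.mem_iInter, SetLike.mem_coe]
    exact fun H : ClosedCocompactSubgroup G ↦ H.1.one_mem

lemma ResiduallyCompactGroup.of_iInter_eq_one {ι : Type*} (H : ι → Subgroup G)
    (hH : ∀ i, IsClosed (H i : Set G) ∧ IsCocompactSubgroup (H i))
    (h : ⋂ i, (H i : Set G) = {1}) : ResiduallyCompactGroup G := by
  intro g hg
  have hgH : g ∉ ⋂ i, (H i : Set G) := by simpa [h] using hg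
  simp only [Set.mem_iInter, not_forall] at hgH
  obtain ⟨i, hi⟩ := hgH
  exact ⟨H i, (hH i).1, (hH i).2, hi⟩

end

theorem residuallyCompact_iff_exists_approximation_general
    {G : Type*} [Group G] [TopologicalSpace G] [SecondCountableTopology G] :
    ResiduallyCompactGroup G ↔
      ∃ Gseq : ℕ → Subgroup G,
        (∀ n, IsClosed ((Gseq n : Set G)) ∧ IsCocompactSubgroup (Gseq n)) ∧
        (⋂ n, ((Gseq n) : Set G)) = {1} := by
  refine ⟨fun hG ↦ ?_, fun ⟨Gseq, hGseq, h⟩ ↦ .of_iInter_eq_one Gseq hGseq h⟩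
  have : Nonempty (ClosedCocompactSubgroup G) := ⟨⟨⊤, isClosed_univ, isCocompactSubgroup_top⟩⟩
  obtain ⟨k, hk⟩ := exists_nat_iInter_eq_of_isClosed
    (fun H : ClosedCocompactSubgroup G ↦ (H.1 : Set G)) fun H ↦ H.2.1
  exact ⟨fun n ↦ (k n).1, fun n ↦ (k n).2, hk.trans hG.iInter_closedCocompactSubgroup_eq⟩

/-- A second countable locally compact Hausdorff group `G` is residually
compact iff there is a sequence `(Gₙ)` of closed cocompact subgroups with `⋂ₙ Gₙ = {1}`. -/
theorem residuallyCompact_iff_exists_approximation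
    {G : Type*} [Group G] [TopologicalSpace G] [IsTopologicalGroup G]
    [LocallyCompactSpace G] [T2Space G] [SecondCountableTopology G] :
    ResiduallyCompactGroup G ↔
      ∃ Gseq : ℕ → Subgroup G,
        (∀ n, IsClosed ((Gseq n : Set G)) ∧ IsCocompactSubgroup (Gseq n)) ∧
        (⋂ n, ((Gseq n) : Set G)) = {1} :=
  residuallyCompact_iff_exists_approximation_general
end

section
/- Let G be a locally compact Hausdorff topological group and let H be a closed cocompact subgroup of G. If H, regarded as a topological group with the subspace topology, is residually compact, then G is residually compact. -/
open Pointwise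

/-!
An element `g ≠ 1` outside `H` is already separated by `H` itself. An element `g ≠ 1` of `H`
lies outside a closed cocompact subgroup `L` of `H`; viewed in `G`, `L` is still closed (`H` is
closed) and cocompact: if `G = K * H` and `H = K' * L`, then `G = (K * K') * L`.
-/

section

variable {G : Type*} [Group G] [TopologicalSpace G] {H : Subgroup G} {L : Subgroup H}

theorem IsClosed.subgroupMap_subtype (hH : IsClosed (H : Set G)) (hL : IsClosed (L : Set H)) :
    IsClosed (L.map H.subtype : Set G) :=
  hH.isClosedEmbedding_subtypeVal.isClosedMap _ hL

theorem IsCocompactSubgroup.map_subtype [ContinuousMul G] (hH : IsCocompactSubgroup H)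
    (hL : IsCocompactSubgroup L) : IsCocompactSubgroup (L.map H.subtype) := by
  obtain ⟨K, hK, hKH⟩ := hH
  obtain ⟨K', hK', hK'L⟩ := hL
  refine ⟨K * H.subtype '' K', hK.mul (hK'.image continuous_subtype_val), ?_⟩
  calc K * H.subtype '' K' * (L.map H.subtype : Set G)
      = K * H.subtype '' (K' * L) := by rw [Subgroup.coe_map, Set.image_mul, mul_assoc]
    _ = Set.univ := by
      rw [hK'L, Set.image_univ, Subgroup.coe_subtype, Subtype.range_coe, hKH]

end

theorem residuallyCompact_of_closed_cocompact_subgroup_general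
    {G : Type*} [Group G] [TopologicalSpace G] [IsTopologicalGroup G]
    (H : Subgroup G) (hclosed : IsClosed (H : Set G)) (hcc : IsCocompactSubgroup H)
    (hres : ResiduallyCompactGroup ↥H) :
    ResiduallyCompactGroup G := by
  intro g hg
  by_cases hgH : g ∈ H
  · obtain ⟨L, hLclosed, hLcc, hgL⟩ := hres ⟨g, hgH⟩ (by simpa using hg)
    refine ⟨L.map H.subtype, hclosed.subgroupMap_subtype hLclosed, hcc.map_subtype hLcc, ?_⟩
    exact fun hgL' => hgL ((Subgroup.mem_map_iff_mem H.subtype_injective).mp hgL')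
  · exact ⟨H, hclosed, hcc, hgH⟩

/-- If a closed cocompact subgroup `H` of a locally compact Hausdorff group
`G` is residually compact (in the subspace topology), then so is `G`. -/
theorem residuallyCompact_of_closed_cocompact_subgroup
    {G : Type*} [Group G] [TopologicalSpace G] [IsTopologicalGroup G]
    [LocallyCompactSpace G] [T2Space G]
    (H : Subgroup G) (hclosed : IsClosed (H : Set G)) (hcc : IsCocompactSubgroup H)
    (hres : ResiduallyCompactGroup ↥H) :
    ResiduallyCompactGroup G :=
  residuallyCompact_of_closed_cocompact_subgroup_general H hclosed hcc hres
end

section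
/- Let G be a σ-compact, residually compact, locally compact Hausdorff topological group and let H be an open normal cocompact subgroup of G. Then H, regarded as a topological group with the subspace topology, is residually compact. -/
open Pointwise

/-!
Given `g ≠ 1` in `H`, pick a closed cocompact `L ≤ G` missing `g`; then `L ∩ H` is a closed
subgroup of `H` missing `g`, and it is cocompact in `H`. Since `H` is open and cocompact, `G ⧸ H`
is compact and discrete, so `H` has finite index; hence `L ∩ H` has finite index in `L`, and
`G = K L = K T (L ∩ H)` for a finite set `T` of coset representatives. Finally a subgroup of the
closed subgroup `H` that is cocompact in `G` is cocompact in `H`, with compact set `K T ∩ H`.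
-/

theorem Subgroup.exists_finite_subset_mul_inf {G : Type*} [Group G] (L H : Subgroup G)
    [H.FiniteIndex] : ∃ T : Set G, T.Finite ∧ (L : Set G) ⊆ T * ((L ⊓ H : Subgroup G) : Set G) := by
  refine ⟨Set.range fun q : L ⧸ H.subgroupOf L => ((q.out : L) : G), Set.finite_range _, ?_⟩
  intro l hl
  obtain ⟨h, hh⟩ := QuotientGroup.mk_out_eq_mul (H.subgroupOf L) ⟨l, hl⟩
  refine ⟨_, ⟨QuotientGroup.mk ⟨l, hl⟩, rfl⟩, ((h : L) : G)⁻¹, ?_, ?_⟩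
  · exact ⟨L.inv_mem (h : L).2, H.inv_mem (Subgroup.mem_subgroupOf.1 h.2)⟩
  · simp [hh]

namespace IsCocompactSubgroup

variable {G : Type*} [Group G] [TopologicalSpace G]

theorem of_subset_mul [ContinuousMul G] {L M : Subgroup G} (hL : IsCocompactSubgroup L)
    {C : Set G} (hC : IsCompact C) (hLM : (L : Set G) ⊆ C * M) : IsCocompactSubgroup M := by
  obtain ⟨K, hK, hKL⟩ := hL
  refine ⟨K * C, hK.mul hC, Set.eq_univ_of_univ_subset ?_⟩
  calc Set.univ = K * (L : Set G) := hKL.symm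
    _ ⊆ K * (C * M) := Set.mul_subset_mul_left hLM
    _ = K * C * M := (mul_assoc _ _ _).symm

theorem inf_of_finiteIndex [ContinuousMul G] {L : Subgroup G} (hL : IsCocompactSubgroup L)
    (H : Subgroup G) [H.FiniteIndex] : IsCocompactSubgroup (L ⊓ H) :=
  let ⟨_, hT, hLT⟩ := L.exists_finite_subset_mul_inf H
  hL.of_subset_mul hT.isCompact hLT

theorem subgroupOf {M H : Subgroup G} (hM : IsCocompactSubgroup M) (hMH : M ≤ H)
    (hH : IsClosed (H : Set G)) : IsCocompactSubgroup (M.subgroupOf H) := by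
  obtain ⟨K, hK, hKM⟩ := hM
  refine ⟨Subtype.val ⁻¹' K, ?_, Set.eq_univ_of_forall fun x => ?_⟩
  · rw [Subtype.isCompact_iff, Set.image_preimage_eq_inter_range, Subtype.range_coe]
    exact hK.inter_right hH
  · obtain ⟨k, hk, m, hm, hkm⟩ : (x : G) ∈ K * (M : Set G) := hKM ▸ Set.mem_univ _
    have hkH : k ∈ H := by
      rw [eq_mul_inv_of_mul_eq hkm]
      exact H.mul_mem x.2 (H.inv_mem (hMH hm))
    exact ⟨⟨k, hkH⟩, hk, ⟨m, hMH hm⟩, hm, Subtype.ext hkm⟩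

theorem finiteIndex_of_isOpen [SeparatelyContinuousMul G] {H : Subgroup G}
    (hH : IsCocompactSubgroup H) (hopen : IsOpen (H : Set G)) : H.FiniteIndex := by
  obtain ⟨K, hK, hKH⟩ := hH
  have : DiscreteTopology (G ⧸ H) := QuotientGroup.discreteTopology hopen
  have hKsurj : QuotientGroup.mk '' K = (Set.univ : Set (G ⧸ H)) := by
    refine Set.eq_univ_of_forall fun q => ?_
    obtain ⟨x, rfl⟩ := QuotientGroup.mk_surjective q
    change x ∈ QuotientGroup.mk ⁻¹' (QuotientGroup.mk '' K)
    rw [QuotientGroup.preimage_image_mk_eq_mul, hKH]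
    trivial
  have : CompactSpace (G ⧸ H) :=
    ⟨hKsurj ▸ hK.image QuotientGroup.continuous_mk⟩
  have : Finite (G ⧸ H) := finite_of_compact_of_discrete
  exact Subgroup.finiteIndex_of_finite_quotient

end IsCocompactSubgroup

theorem residuallyCompact_open_normal_cocompact_subgroup_general
    {G : Type*} [Group G] [TopologicalSpace G] [IsTopologicalGroup G]
    (hres : ResiduallyCompactGroup G)
    (H : Subgroup G) (hopen : IsOpen (H : Set G))
    (hcc : IsCocompactSubgroup H) :
    ResiduallyCompactGroup ↥H := by
  intro g hg
  obtain ⟨L, hLclosed, hLcc, hgL⟩ := hres g (by simpa using hg)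
  have := hcc.finiteIndex_of_isOpen hopen
  refine ⟨L.subgroupOf H, hLclosed.preimage continuous_subtype_val, ?_,
    fun hgLH => hgL (Subgroup.mem_subgroupOf.1 hgLH)⟩
  rw [← Subgroup.inf_subgroupOf_right]
  exact (hLcc.inf_of_finiteIndex H).subgroupOf inf_le_right (H.isClosed_of_isOpen hopen)

/-- An open normal cocompact subgroup of a σ-compact, residually compact,
locally compact Hausdorff group is itself residually compact (in the subspace topology). -/
theorem residuallyCompact_open_normal_cocompact_subgroup
    {G : Type*} [Group G] [TopologicalSpace G] [IsTopologicalGroup G]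
    [LocallyCompactSpace G] [T2Space G] [SigmaCompactSpace G]
    (hres : ResiduallyCompactGroup G)
    (H : Subgroup G) (hopen : IsOpen (H : Set G)) (hnormal : H.Normal)
    (hcc : IsCocompactSubgroup H) :
    ResiduallyCompactGroup ↥H :=
  residuallyCompact_open_normal_cocompact_subgroup_general hres H hopen hcc
end

section
/- Let G be a second countable locally compact Hausdorff topological group and let d₁ and d₂ be two proper, right-invariant, compatible metrics on G. Then there exists a monotonically increasing function ρ : [0,∞) → [0,∞) with ρ(t) → ∞ as t → ∞ such that d₂(g,h) ≤ ρ(d₁(g,h)) for all g, h ∈ G. Consequently, the identity map is a coarse equivalence between (G,d₁) and (G,d₂): there exist nondecreasing functions ρ₋, ρ₊ : [0,∞) → [0,∞) with ρ₋(t) → ∞ and ρ₊(t) → ∞ as t → ∞ such that ρ₋(d₁(g,h)) ≤ d₂(g,h) ≤ ρ₊(d₁(g,h)) for all g, h ∈ G. -/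
open Filter

/-- A *proper, right-invariant, compatible metric* on a topological group `G`: a metric
(given by its distance function) that is right-invariant, has compact closed balls, and
induces the topology of `G`. -/
structure PRICMetric (G : Type*) [Group G] [TopologicalSpace G] where
  d : G → G → ℝ
  d_self : ∀ x, d x x = 0
  eq_of_d_eq_zero : ∀ x y, d x y = 0 → x = y
  d_symm : ∀ x y, d x y = d y x
  d_triangle : ∀ x y z, d x z ≤ d x y + d y z
  right_invariant : ∀ g₁ g₂ h, d (g₁ * h) (g₂ * h) = d g₁ g₂
  proper : ∀ x r, IsCompact {y | d x y ≤ r}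
  compatible : ∀ s : Set G, IsOpen s ↔ ∀ x ∈ s, ∃ ε > 0, {y | d x y < ε} ⊆ s

/-!
Right invariance gives `d(g, h) = d(1, g h⁻¹)`, so it suffices to compare the two length
functions `g ↦ dᵢ(1, g)`. A closed `d₁`-ball around `1` is compact and `d₂(1, ·)` is continuous,
so `d₂(1, ·)` is bounded on it; the bound, as a function of the radius, is the upper control.
Exchanging the metrics gives an upper control `τ` for `d₁` in terms of `d₂`, and its generalized
inverse is the lower control.
-/

section ControlFunctions

variable {α : Type*}

/-- `max t` forces growth to infinity; `insert 0` avoids the junk value `sSup ∅ = 0` breaking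
monotonicity when the sublevel set is empty. -/
noncomputable def upperControl (u v : α → ℝ) (t : ℝ) : ℝ :=
  max t (sSup (insert 0 (u '' {x | v x ≤ t})))

variable {u v : α → ℝ}

lemma le_upperControl (t : ℝ) : t ≤ upperControl u v t :=
  le_max_left _ _

lemma upperControl_nonneg (hbdd : ∀ t, BddAbove (u '' {x | v x ≤ t})) (t : ℝ) :
    0 ≤ upperControl u v t :=
  (le_csSup ((hbdd t).insert 0) (Set.mem_insert 0 _)).trans (le_max_right _ _)

lemma le_upperControl_apply (hbdd : ∀ t, BddAbove (u '' {x | v x ≤ t})) (x : α) :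
    u x ≤ upperControl u v (v x) :=
  (le_csSup ((hbdd (v x)).insert 0) (Set.mem_insert_of_mem 0 ⟨x, le_refl (v x), rfl⟩)).trans
    (le_max_right _ _)

lemma monotone_upperControl (hbdd : ∀ t, BddAbove (u '' {x | v x ≤ t})) :
    Monotone (upperControl u v) := fun _ t hst =>
  max_le_max hst <| csSup_le_csSup ((hbdd t).insert 0) (Set.insert_nonempty _ _) <|
    Set.insert_subset_insert <| Set.image_mono fun _ hx => le_trans hx hst

lemma tendsto_upperControl : Tendsto (upperControl u v) atTop atTop :=
  tendsto_atTop_mono le_upperControl tendsto_id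

end ControlFunctions

section LowerInverse

/-- The generalized inverse of `σ`, restricted to nonnegative arguments so that it is bounded
below. -/
noncomputable def lowerInverse (σ : ℝ → ℝ) (t : ℝ) : ℝ :=
  sInf {s | 0 ≤ s ∧ t ≤ σ s}

variable {σ : ℝ → ℝ}

lemma lowerInverse_nonneg (t : ℝ) : 0 ≤ lowerInverse σ t := by
  rcases Set.eq_empty_or_nonempty {s | 0 ≤ s ∧ t ≤ σ s} with he | hne
  · simp [lowerInverse, he]
  · exact le_csInf hne fun _ hs => hs.1

lemma lowerInverse_le {s t : ℝ} (hs : 0 ≤ s) (ht : t ≤ σ s) : lowerInverse σ t ≤ s :=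
  csInf_le ⟨0, fun _ hx => hx.1⟩ ⟨hs, ht⟩

lemma nonempty_lowerInverse_set (hσ : Tendsto σ atTop atTop) (t : ℝ) :
    {s | 0 ≤ s ∧ t ≤ σ s}.Nonempty :=
  ((eventually_ge_atTop 0).and (hσ.eventually_ge_atTop t)).exists

lemma monotone_lowerInverse (hσ : Tendsto σ atTop atTop) : Monotone (lowerInverse σ) :=
  fun _ t hst => csInf_le_csInf ⟨0, fun _ hx => hx.1⟩ (nonempty_lowerInverse_set hσ t)
    fun _ hx => ⟨hx.1, hst.trans hx.2⟩

lemma tendsto_lowerInverse (hσ_mono : Monotone σ) (hσ : Tendsto σ atTop atTop) :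
    Tendsto (lowerInverse σ) atTop atTop := by
  refine tendsto_atTop.2 fun M => ?_
  filter_upwards [eventually_gt_atTop (σ M)] with t ht
  refine le_csInf (nonempty_lowerInverse_set hσ t) fun s hs => ?_
  by_contra! hsM
  exact (ht.trans_le hs.2).not_ge (hσ_mono hsM.le)

end LowerInverse

namespace PRICMetric

variable {G : Type*} [Group G] [TopologicalSpace G] (d : PRICMetric G)

lemma d_nonneg (x y : G) : 0 ≤ d.d x y := by
  have h := d.d_triangle x y x
  rw [d.d_self, d.d_symm y x] at h
  linarith

lemma abs_d_sub_d_le (x y z : G) : |d.d x y - d.d x z| ≤ d.d y z := by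
  have h₁ := d.d_triangle x y z
  have h₂ := d.d_triangle x z y
  rw [d.d_symm z y] at h₂
  exact abs_sub_le_iff.2 ⟨by linarith, by linarith⟩

lemma isOpen_ball (x : G) (ε : ℝ) : IsOpen {y | d.d x y < ε} := by
  refine (d.compatible _).2 fun z hz => ⟨ε - d.d x z, sub_pos.2 hz, fun y hy => ?_⟩
  have hzy : d.d z y < ε - d.d x z := hy
  show d.d x y < ε
  linarith [d.d_triangle x z y]

lemma continuous_d (x : G) : Continuous (d.d x) := by
  refine continuous_iff_continuousAt.2 fun g => Metric.tendsto_nhds.2 fun ε hε => ?_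
  filter_upwards [(d.isOpen_ball g ε).mem_nhds (by simpa [d.d_self] using hε)] with y hy
  rw [Real.dist_eq, abs_sub_comm]
  exact (d.abs_d_sub_d_le x g y).trans_lt hy

lemma d_one_mul_inv (g h : G) : d.d 1 (g * h⁻¹) = d.d g h := by
  rw [d.d_symm, ← d.right_invariant g h h⁻¹, mul_inv_cancel]

lemma bddAbove_image_closedBall (d' : PRICMetric G) (t : ℝ) :
    BddAbove (d'.d 1 '' {g | d.d 1 g ≤ t}) :=
  (d.proper 1 t).bddAbove_image (d'.continuous_d 1).continuousOn

lemma d_le_upperControl (d' : PRICMetric G) (g h : G) :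
    d'.d g h ≤ upperControl (d'.d 1) (d.d 1) (d.d g h) := by
  rw [← d.d_one_mul_inv, ← d'.d_one_mul_inv]
  exact le_upperControl_apply (d.bddAbove_image_closedBall d') _

end PRICMetric

theorem pricMetrics_coarsely_equivalent_general
    {G : Type*} [Group G] [TopologicalSpace G]
    (d₁ d₂ : PRICMetric G) :
    (∃ ρ : ℝ → ℝ, (∀ t, 0 ≤ t → 0 ≤ ρ t) ∧ Monotone ρ ∧ Tendsto ρ atTop atTop ∧
      ∀ g h : G, d₂.d g h ≤ ρ (d₁.d g h)) ∧
    (∃ ρlo ρhi : ℝ → ℝ, (∀ t, 0 ≤ t → 0 ≤ ρlo t) ∧ (∀ t, 0 ≤ t → 0 ≤ ρhi t) ∧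
      Monotone ρlo ∧ Monotone ρhi ∧
      Tendsto ρlo atTop atTop ∧ Tendsto ρhi atTop atTop ∧
      ∀ g h : G, ρlo (d₁.d g h) ≤ d₂.d g h ∧ d₂.d g h ≤ ρhi (d₁.d g h)) := by
  set ρhi := upperControl (d₂.d 1) (d₁.d 1)
  set τ := upperControl (d₁.d 1) (d₂.d 1)
  have hρhi_mono : Monotone ρhi := monotone_upperControl (d₁.bddAbove_image_closedBall d₂)
  have hρhi_nonneg (t : ℝ) (_ : 0 ≤ t) : 0 ≤ ρhi t :=
    upperControl_nonneg (d₁.bddAbove_image_closedBall d₂) t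
  have hτ_mono : Monotone τ := monotone_upperControl (d₂.bddAbove_image_closedBall d₁)
  have hρlo_bound (g h : G) : lowerInverse τ (d₁.d g h) ≤ d₂.d g h :=
    lowerInverse_le (d₂.d_nonneg g h) (d₂.d_le_upperControl d₁ g h)
  exact ⟨⟨ρhi, hρhi_nonneg, hρhi_mono, tendsto_upperControl, d₁.d_le_upperControl d₂⟩,
    ⟨lowerInverse τ, ρhi, fun t _ => lowerInverse_nonneg t, hρhi_nonneg,
      monotone_lowerInverse tendsto_upperControl, hρhi_mono,
      tendsto_lowerInverse hτ_mono tendsto_upperControl, tendsto_upperControl,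
      fun g h => ⟨hρlo_bound g h, d₁.d_le_upperControl d₂ g h⟩⟩⟩

/-- Any two proper right-invariant compatible metrics on a second countable
locally compact Hausdorff group are related by a monotone function tending to infinity;
consequently the identity map is a coarse equivalence between them. -/
theorem pricMetrics_coarsely_equivalent
    {G : Type*} [Group G] [TopologicalSpace G] [IsTopologicalGroup G]
    [LocallyCompactSpace G] [T2Space G] [SecondCountableTopology G]
    (d₁ d₂ : PRICMetric G) :
    (∃ ρ : ℝ → ℝ, (∀ t, 0 ≤ t → 0 ≤ ρ t) ∧ Monotone ρ ∧ Tendsto ρ atTop atTop ∧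
      ∀ g h : G, d₂.d g h ≤ ρ (d₁.d g h)) ∧
    (∃ ρlo ρhi : ℝ → ℝ, (∀ t, 0 ≤ t → 0 ≤ ρlo t) ∧ (∀ t, 0 ≤ t → 0 ≤ ρhi t) ∧
      Monotone ρlo ∧ Monotone ρhi ∧
      Tendsto ρlo atTop atTop ∧ Tendsto ρhi atTop atTop ∧
      ∀ g h : G, ρlo (d₁.d g h) ≤ d₂.d g h ∧ d₂.d g h ≤ ρhi (d₁.d g h)) :=
  pricMetrics_coarsely_equivalent_general d₁ d₂
end

section
/- Let G be a locally compact Hausdorff topological group and let σ = (G_n)_{n∈ℕ} be a decreasing residually compact approximation of G consisting of discrete normal cocompact subgroups, i.e. each G_n is a closed, discrete, normal, cocompact subgroup, G_{n+1} ⊆ G_n for all n, and ⋂_n G_n = {1_G}. Then σ is regular: for every compact subset F ⊆ G there exists n ∈ ℕ such that F⁻¹F ∩ G_n = {1_G} (equivalently, by normality, F⁻¹F ∩ ⋃_{k∈G} k G_n k⁻¹ = {1_G}). -/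
/-! Only the finitely many nontrivial elements of `F⁻¹F ∩ G₀` can obstruct regularity (compact
meets closed discrete in a finite set), and each of them leaves the decreasing sequence `Gₙ` for
good at some stage because `⋂ₙ Gₙ = {1}`; past the last of these stages `F⁻¹F ∩ Gₙ ⊆ {1}`. -/

open Pointwise Filter

theorem Set.Finite.eventually_inter_subset_of_iInter_subset {α ι : Type*} [Preorder ι]
    {s : ι → Set α} (hs : Antitone s) {C t : Set α} (hC : C.Finite) (hint : ⋂ i, s i ⊆ t) :
    ∀ᶠ i in atTop, C ∩ s i ⊆ t := by
  have hleave : ∀ᶠ i in atTop, C \ t ⊆ (s i)ᶜ := by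
    refine eventually_subset_of_finite hC.sdiff fun x hx => ?_
    obtain ⟨j, hj⟩ : ∃ j, x ∉ s j := by
      by_contra! h
      exact hx.2 (hint (Set.mem_iInter.2 h))
    exact (eventually_ge_atTop j).mono fun i hji hxi => hj (hs hji hxi)
  refine hleave.mono fun i hi x hx => ?_
  by_contra hxt
  exact hi ⟨hx.1, hxt⟩ hx.2

theorem IsCompact.finite_inter_of_isClosed_of_discreteTopology {X : Type*} [TopologicalSpace X]
    {K S : Set X} (hK : IsCompact K) (hS : IsClosed S) [DiscreteTopology S] : (K ∩ S).Finite :=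
  (hK.inter_right hS).finite
    ((isDiscrete_iff_discreteTopology.2 ‹_›).mono Set.inter_subset_right)

theorem regular_of_decreasing_discrete_normal_approximation_general
    {G : Type*} [Group G] [TopologicalSpace G] [IsTopologicalGroup G]
    (Gseq : ℕ → Subgroup G)
    (hclosed : ∀ n, IsClosed ((Gseq n : Set G)))
    (hdiscrete : ∀ n, DiscreteTopology ↥(Gseq n))
    (hdec : ∀ n, Gseq (n + 1) ≤ Gseq n)
    (hinter : (⋂ n, ((Gseq n) : Set G)) = {1}) :
    ∀ F : Set G, IsCompact F → ∃ n, (F⁻¹ * F) ∩ (Gseq n : Set G) ⊆ {1} := by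
  intro F hF
  have hanti : Antitone fun n => (Gseq n : Set G) := fun _ _ h => antitone_nat_of_succ_le hdec h
  have := hdiscrete 0
  have hfin : ((F⁻¹ * F) ∩ Gseq 0).Finite :=
    (hF.inv.mul hF).finite_inter_of_isClosed_of_discreteTopology (hclosed 0)
  obtain ⟨n, hn⟩ := (hfin.eventually_inter_subset_of_iInter_subset hanti hinter.le).exists
  exact ⟨n, fun x hx => hn ⟨⟨hx.1, hanti n.zero_le hx.2⟩, hx.2⟩⟩

/-- A decreasing residually compact approximation consisting of discrete
normal cocompact subgroups is regular: for every compact `F ⊆ G` there is `n` with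
`F⁻¹F ∩ Gₙ` trivial. -/
theorem regular_of_decreasing_discrete_normal_approximation
    {G : Type*} [Group G] [TopologicalSpace G] [IsTopologicalGroup G]
    [LocallyCompactSpace G] [T2Space G]
    (Gseq : ℕ → Subgroup G)
    (hclosed : ∀ n, IsClosed ((Gseq n : Set G)))
    (hdiscrete : ∀ n, DiscreteTopology ↥(Gseq n))
    (hnormal : ∀ n, (Gseq n).Normal)
    (hcc : ∀ n, IsCocompactSubgroup (Gseq n))
    (hdec : ∀ n, Gseq (n + 1) ≤ Gseq n)
    (hinter : (⋂ n, ((Gseq n) : Set G)) = {1}) :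
    ∀ F : Set G, IsCompact F → ∃ n, (F⁻¹ * F) ∩ (Gseq n : Set G) ⊆ {1} :=
  regular_of_decreasing_discrete_normal_approximation_general Gseq hclosed hdiscrete hdec hinter
end

section
/- Let X be a metric space equipped with a right action of a group H acting by isometries, let Y be the orbit space X/H with the induced pseudometric d_Y(π(x), π(y)) = inf_{h∈H} d(x, y·h), and let π : X → Y be the canonical projection. Let x ∈ X and R > 0 be such that π is injective when restricted to the open ball B_{3R}(x). Then π restricted to B_R(x) is an isometry from B_R(x) onto the ball B_R(π(x)) in Y; that is, d_Y(π(u), π(v)) = d(u, v) for all u, v ∈ B_R(x), and π(B_R(x)) = B_R(π(x)). -/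
/-! If a point `act v h` of the orbit of `v` came closer to `u` than `v` itself, then, since
`u, v ∈ B_R(x)`, it would lie in `B_{3R}(x)` together with `v`, and injectivity of the
projection there forces `act v h = v`. Hence the infimum defining `d_Y(u, v)` is attained
at `h = 1`. The statement about balls is just the definition of an infimum. -/

open Metric

section OrbitDistance

variable {X H : Type*} [PseudoMetricSpace X] (act : X → H → X)

theorem dist_le_dist_act_of_mem_ball {x u v : X} {R : ℝ} (hu : u ∈ ball x R)
    (hv : v ∈ ball x R) (hfix : ∀ h, act v h ∈ ball x (3 * R) → act v h = v) (h : H) :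
    dist u v ≤ dist u (act v h) := by
  by_contra! hcloser
  have huv : dist u v < 2 * R := by
    linarith [dist_triangle_right u v x, mem_ball.mp hu, mem_ball.mp hv]
  have hmem : act v h ∈ ball x (3 * R) := by
    rw [mem_ball']
    linarith [dist_triangle x u (act v h), mem_ball'.mp hu]
  rw [hfix h hmem] at hcloser
  exact lt_irrefl _ hcloser

theorem sInf_dist_act_eq_dist [One H] (act_one : ∀ x, act x 1 = x) {u v : X}
    (hmin : ∀ h, dist u v ≤ dist u (act v h)) :
    sInf {r | ∃ h : H, r = dist u (act v h)} = dist u v :=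
  IsLeast.csInf_eq ⟨⟨1, by rw [act_one]⟩, by rintro _ ⟨h, rfl⟩; exact hmin h⟩

end OrbitDistance

theorem quotient_projection_isometry_on_small_ball_general
    {X : Type*} [MetricSpace X] {H : Type*} [Group H]
    (act : X → H → X)
    (act_one : ∀ x, act x 1 = x)
    (dY : X → X → ℝ)
    (hdY : ∀ x y, dY x y = sInf {r | ∃ h : H, r = dist x (act y h)})
    (x : X) (R : ℝ)
    (hinj : ∀ u ∈ Metric.ball x (3 * R), ∀ v ∈ Metric.ball x (3 * R),
      (∃ h : H, act u h = v) → u = v) :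
    (∀ u ∈ Metric.ball x R, ∀ v ∈ Metric.ball x R, dY u v = dist u v) ∧
    (∀ v : X, dY x v < R → ∃ h : H, act v h ∈ Metric.ball x R) := by
  refine ⟨fun u hu v hv => ?_, fun v hv => ?_⟩
  · have hv₃ : v ∈ ball x (3 * R) :=
      ball_subset_ball (by linarith [pos_of_mem_ball hv]) hv
    rw [hdY]
    exact sInf_dist_act_eq_dist act act_one <|
      dist_le_dist_act_of_mem_ball act hu hv fun h hh => (hinj v hv₃ _ hh ⟨h, rfl⟩).symm
  · rw [hdY] at hv
    obtain ⟨_, ⟨h, rfl⟩, hlt⟩ := exists_lt_of_csInf_lt ⟨_, Set.mem_ofPred.mpr ⟨1, rfl⟩⟩ hv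
    exact ⟨h, mem_ball'.mpr hlt⟩

/-- Let `X` be a metric space with a right action of a group `H` by
isometries, let `d_Y` denote the induced pseudometric on the orbit space (expressed here on
points of `X`), and let `π` be the orbit projection. If `π` is injective on the open ball
`B_{3R}(x)`, then `π` restricted to `B_R(x)` is an isometry onto the ball `B_R(π(x))`:
`d_Y(π(u), π(v)) = d(u,v)` for `u, v ∈ B_R(x)`, and `π(B_R(x)) = B_R(π(x))`. -/
theorem quotient_projection_isometry_on_small_ball
    {X : Type*} [MetricSpace X] {H : Type*} [Group H]
    (act : X → H → X)
    (act_one : ∀ x, act x 1 = x)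
    (act_mul : ∀ x h₁ h₂, act (act x h₁) h₂ = act x (h₁ * h₂))
    (act_isometry : ∀ x y h, dist (act x h) (act y h) = dist x y)
    (dY : X → X → ℝ)
    (hdY : ∀ x y, dY x y = sInf {r | ∃ h : H, r = dist x (act y h)})
    (x : X) (R : ℝ) (hR : 0 < R)
    (hinj : ∀ u ∈ Metric.ball x (3 * R), ∀ v ∈ Metric.ball x (3 * R),
      (∃ h : H, act u h = v) → u = v) :
    (∀ u ∈ Metric.ball x R, ∀ v ∈ Metric.ball x R, dY u v = dist u v) ∧
    (∀ v : X, dY x v < R → ∃ h : H, act v h ∈ Metric.ball x R) :=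
  quotient_projection_isometry_on_small_ball_general act act_one dY hdY x R hinj
end

section
/- Let G be a second countable locally compact Hausdorff residually compact group equipped with a proper, right-invariant, compatible metric d, and let σ = (G_n)_{n∈ℕ} be a regular residually compact approximation of G. For each n let d_n be the quotient metric on G/G_n, and let d^B be a box metric on the disjoint union X = ⨆_{n∈ℕ} G/G_n. Let s ∈ ℕ, and suppose the metric space (X, d^B) has asymptotic dimension at most s: for every R > 0 there exist B > 0 and families 𝒱⁰, …, 𝒱ˢ of subsets of X such that every member of 𝒱⁰ ∪ … ∪ 𝒱ˢ has diameter at most B, every subset of X of diameter at most R is contained in some member, and any two distinct members of each 𝒱ˡ lie at distance greater than R. Then for every ε > 0 and every compact subset M ⊆ G there exist n ∈ ℕ and continuous compactly supported functions μ₀, …, μ_s : G → [0,1] such that: (a) supp(μ_l) ∩ supp(μ_l)·h = ∅ for every l ∈ {0,…,s} and every h ∈ G_n \ {1_G}; (b) ∑_{l=0}^{s} ∑_{h∈G_n} μ_l(gh) = 1 for every g ∈ G (by (a), for each l and g at most one term of the inner sum is nonzero); (c) sup_{h∈G} |μ_l(h) − μ_l(gh)| ≤ ε for every l ∈ {0,…,s}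 and every g ∈ M. -/
open Pointwise

/-- The quotient metric on `G/H` induced by a metric on `G`, expressed on coset
representatives. -/
noncomputable def quotDist {G : Type*} [Group G] [TopologicalSpace G]
    (M : PRICMetric G) (H : Subgroup G) (g₁ g₂ : G) : ℝ :=
  sInf {r | ∃ h₁ ∈ H, ∃ h₂ ∈ H, r = M.d (g₁ * h₁) (g₂ * h₂)}

/-- A *box metric* on the disjoint union `⨆ₙ G/Gₙ`: a metric restricting to the quotient
metric on each `G/Gₙ`, with `d^B(G/Gₙ, G/Gₘ) → ∞` as `n + m → ∞`, `n ≠ m`. -/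
def IsBoxMetric {G : Type*} [Group G] [TopologicalSpace G] (M : PRICMetric G)
    (Gseq : ℕ → Subgroup G)
    (dB : ((n : ℕ) × (G ⧸ Gseq n)) → ((n : ℕ) × (G ⧸ Gseq n)) → ℝ) : Prop :=
  (∀ x, dB x x = 0) ∧ (∀ x y, dB x y = dB y x) ∧
  (∀ x y z, dB x z ≤ dB x y + dB y z) ∧
  (∀ (n : ℕ) (g₁ g₂ : G),
    dB ⟨n, QuotientGroup.mk g₁⟩ ⟨n, QuotientGroup.mk g₂⟩ = quotDist M (Gseq n) g₁ g₂) ∧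
  (∀ R : ℝ, ∃ N : ℕ, ∀ m n : ℕ, m ≠ n → N ≤ m + n →
    ∀ (x : G ⧸ Gseq m) (y : G ⧸ Gseq n), R ≤ dB ⟨m, x⟩ ⟨n, y⟩)

/-!
An `R`-separated, `B`-bounded cover of the box space by `s + 1` colour classes gives on `G/Gₙ`
the `1`-Lipschitz bumps `x ↦ max 0 (r - d(x, U))`. Every point lies in some `U`, so their sum is
at least `r`, and the normalised bumps form a partition of unity with Lipschitz constant
`O(s / r)`; for `4r ≤ R` the bumps of one colour have disjoint supports, and by cocompactness of
`Gₙ` only finitely many of them are nonzero on `G/Gₙ`. Pulled back to `G`, the bump of `U` lives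
on the `Gₙ`-translates of a region of diameter `≤ B + 2r`; multiplying by a cutoff of width `T`
around a chosen centre keeps exactly one translate, because by regularity `G → G/Gₙ` is injective
on balls of radius `B + 2r + T`. The translates of the resulting compactly supported functions
are then disjoint and sum back to the bumps, and taking `r` and `T` large compared with
`max_{g ∈ M} d(1, g) / ε` gives `ε`-invariance.
-/

open Metric Set Function

namespace PRICMetric

variable {G : Type*} [Group G] [TopologicalSpace G] (dG : PRICMetric G)

/-- `replaceTopology` makes the given topology of `G` the metric topology definitionally, so
continuity and compactness in the theorem are those of this metric space. -/
abbrev toMetricSpace : MetricSpace G :=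
  MetricSpace.replaceTopology
    { dist := dG.d
      dist_self := dG.d_self
      dist_comm := dG.d_symm
      dist_triangle := dG.d_triangle
      eq_of_dist_eq_zero := dG.eq_of_d_eq_zero _ _ }
    (TopologicalSpace.ext_iff.2 fun s => (dG.compatible s).trans <| by
      simp only [@Metric.isOpen_iff, Metric.ball, dist, dG.d_symm])

theorem properSpace :
    letI := dG.toMetricSpace
    ProperSpace G :=
  letI := dG.toMetricSpace
  ⟨fun x ρ => by
    show IsCompact {y | dG.d y x ≤ ρ}
    simpa only [dG.d_symm] using dG.proper x ρ⟩

theorem isIsometricSMul_op :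
    letI := dG.toMetricSpace
    IsIsometricSMul Gᵐᵒᵖ G :=
  letI := dG.toMetricSpace
  ⟨fun h => Isometry.of_dist_eq fun x y => dG.right_invariant x y h.unop⟩

theorem quotDist_le (H : Subgroup G) (g₁ g₂ : G) : quotDist dG H g₁ g₂ ≤ dG.d g₁ g₂ := by
  apply csInf_le
  · refine ⟨0, ?_⟩
    rintro _ ⟨_, _, _, _, rfl⟩
    exact @dist_nonneg _ dG.toMetricSpace.toPseudoMetricSpace _ _
  · exact ⟨1, H.one_mem, 1, H.one_mem, by simp⟩

theorem exists_d_mul_lt_of_quotDist_lt {H : Subgroup G} {g₁ g₂ : G} {ε : ℝ}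
    (hlt : quotDist dG H g₁ g₂ < ε) : ∃ h ∈ H, dG.d g₁ (g₂ * h) < ε := by
  have hne : {r | ∃ h₁ ∈ H, ∃ h₂ ∈ H, r = dG.d (g₁ * h₁) (g₂ * h₂)}.Nonempty :=
    ⟨_, 1, H.one_mem, 1, H.one_mem, rfl⟩
  obtain ⟨_, ⟨h₁, hh₁, h₂, hh₂, rfl⟩, hlt⟩ := exists_lt_of_csInf_lt hne hlt
  refine ⟨h₂ * h₁⁻¹, H.mul_mem hh₂ (H.inv_mem hh₁), ?_⟩
  rwa [← dG.right_invariant (g₁ * h₁) (g₂ * h₂) h₁⁻¹, mul_inv_cancel_right, mul_assoc] at hlt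

end PRICMetric

theorem Finset.abs_sum_sub_sum_le_of_pairwiseDisjoint {ι α : Type*} {s : Finset ι}
    {f : ι → α → ℝ} (hf : (s : Set ι).PairwiseDisjoint fun i => support (f i)) (x y : α)
    {δ : ℝ} (hδ0 : 0 ≤ δ) (hδ : ∀ i ∈ s, |f i x - f i y| ≤ δ) :
    |∑ i ∈ s, f i x - ∑ i ∈ s, f i y| ≤ 2 * δ := by
  classical
  have card_support_le_one (z : α) : (s.filter fun i => f i z ≠ 0).card ≤ 1 :=
    Finset.card_le_one.2 fun i hi j hj => by
      simp only [Finset.mem_filter] at hi hj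
      by_contra hij
      exact Set.disjoint_left.1 (hf hi.1 hj.1 hij) hi.2 hj.2
  have hcard : (s.filter fun i => f i x ≠ 0 ∨ f i y ≠ 0).card ≤ 2 := by
    rw [Finset.filter_or]
    linarith [Finset.card_union_le (s.filter fun i => f i x ≠ 0) (s.filter fun i => f i y ≠ 0),
      card_support_le_one x, card_support_le_one y]
  rw [← Finset.sum_sub_distrib, ← Finset.sum_filter_of_ne (p := fun i => f i x ≠ 0 ∨ f i y ≠ 0)
    fun i _ hi => by by_contra! h; simp [h.1, h.2] at hi]
  set t := s.filter fun i => f i x ≠ 0 ∨ f i y ≠ 0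
  calc |∑ i ∈ t, (f i x - f i y)|
      ≤ ∑ i ∈ t, |f i x - f i y| := Finset.abs_sum_le_sum_abs _ _
    _ ≤ t.card • δ := Finset.sum_le_card_nsmul _ _ _ fun i hi => hδ i (Finset.mem_filter.1 hi).1
    _ ≤ 2 * δ := by rw [nsmul_eq_mul]; gcongr; exact_mod_cast hcard

theorem abs_div_sub_div_le {p q a b r : ℝ} (hr : 0 < r) (ha : r ≤ a) (hb : r ≤ b) (hq : 0 ≤ q)
    (hqb : q ≤ b) : |p / a - q / b| ≤ (|p - q| + |a - b|) / r := by
  have ha0 : 0 < a := hr.trans_le ha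
  have hb0 : 0 < b := hr.trans_le hb
  have hqb' : |q / b| ≤ 1 := by
    rw [abs_of_nonneg (div_nonneg hq hb0.le)]; exact div_le_one_of_le₀ hqb hb0.le
  have key : p / a - q / b = ((p - q) + q / b * (b - a)) / a := by field_simp; ring
  rw [key, abs_div, abs_of_pos ha0]
  calc |(p - q) + q / b * (b - a)| / a ≤ (|p - q| + |a - b|) / a := by
        gcongr
        calc |(p - q) + q / b * (b - a)| ≤ |p - q| + |q / b| * |b - a| := by
              rw [← abs_mul]; exact abs_add_le _ _
          _ ≤ |p - q| + |a - b| := by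
              rw [abs_sub_comm b a]; nlinarith [abs_nonneg (a - b)]
    _ ≤ (|p - q| + |a - b|) / r := by gcongr

theorem abs_mul_sub_mul_le_of_abs_le_one {a a' b b' : ℝ} (ha' : |a'| ≤ 1) (hb : |b| ≤ 1) :
    |a * b - a' * b'| ≤ |a - a'| + |b - b'| :=
  calc |a * b - a' * b'| = |(a - a') * b + a' * (b - b')| := by ring_nf
    _ ≤ |a - a'| * |b| + |a'| * |b - b'| := by rw [← abs_mul, ← abs_mul]; exact abs_add_le _ _
    _ ≤ |a - a'| + |b - b'| := by
        nlinarith [abs_nonneg (a - a'), abs_nonneg (b - b'), abs_nonneg a', abs_nonneg b]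

section BoxSpace

variable {X : Type*} [PseudoMetricSpace X]

def IsSeparatedFamily (R : ℝ) (V : Set (Set X)) : Prop :=
  ∀ U ∈ V, ∀ U' ∈ V, U ≠ U' → ∀ x ∈ U, ∀ y ∈ U', R < dist x y

theorem IsSeparatedFamily.subsingleton_near {R ρ : ℝ} {V : Set (Set X)}
    (hV : IsSeparatedFamily R V) (hρ : 2 * ρ ≤ R) (x : X) :
    {U ∈ V | ∃ u ∈ U, dist x u < ρ}.Subsingleton := by
  rintro U ⟨hU, u, hu, hxu⟩ U' ⟨hU', u', hu', hxu'⟩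
  by_contra hne
  linarith [hV U hU U' hU' hne u hu u' hu', dist_triangle_left u u' x]

theorem IsSeparatedFamily.eq_of_infDist_le {r R : ℝ} {V : Set (Set X)}
    (hV : IsSeparatedFamily R V) (hr : 0 < r) (hR : 4 * r ≤ R) {U U' : Set X} (hU : U ∈ V)
    (hU' : U' ∈ V) (hUne : U.Nonempty) (hU'ne : U'.Nonempty) {x : X} (hxU : infDist x U ≤ r)
    (hxU' : infDist x U' ≤ r) : U = U' :=
  hV.subsingleton_near (ρ := 2 * r) (by linarith) x
    ⟨hU, (infDist_lt_iff hUne).1 (by linarith)⟩ ⟨hU', (infDist_lt_iff hU'ne).1 (by linarith)⟩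

noncomputable def bump (r : ℝ) (U : Set X) (x : X) : ℝ :=
  max 0 (r - infDist x U)

variable {r : ℝ} {U : Set X} {x : X}

theorem bump_nonneg : 0 ≤ bump r U x :=
  le_max_left _ _

theorem bump_of_mem (hr : 0 ≤ r) (hx : x ∈ U) : bump r U x = r := by
  simp [bump, infDist_zero_of_mem hx, hr]

theorem infDist_lt_of_bump_ne_zero (h : bump r U x ≠ 0) : infDist x U < r := by
  by_contra! h'
  exact h (max_eq_left (by linarith))

theorem lipschitzWith_bump : LipschitzWith 1 (bump r U) := by
  refine LipschitzWith.of_le_add fun x y => max_le (add_nonneg bump_nonneg dist_nonneg) ?_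
  have h1 : infDist y U ≤ infDist x U + dist y x := infDist_le_infDist_add_dist
  have h2 : r - infDist y U ≤ bump r U y := le_max_right _ _
  linarith [dist_comm x y]

end BoxSpace

section BumpSum

variable {X ι : Type*} [PseudoMetricSpace X] [Fintype ι] {r R : ℝ} {S : ι → Finset (Set X)}
  {U : Set X} {x y : X}

theorem abs_bump_sub_le : |bump r U x - bump r U y| ≤ dist x y := by
  simpa [Real.dist_eq] using lipschitzWith_bump.dist_le_mul x y

theorem IsSeparatedFamily.pairwiseDisjoint_support_bump {V W : Set (Set X)}
    (hV : IsSeparatedFamily R V) (hr : 0 < r) (hR : 4 * r ≤ R)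
    (hW : ∀ U ∈ W, U ∈ V ∧ U.Nonempty) : W.PairwiseDisjoint fun U => support (bump r U) :=
  fun U hU U' hU' hne => Set.disjoint_left.2 fun _ hx hx' => hne <|
    hV.eq_of_infDist_le hr hR (hW U hU).1 (hW U' hU').1 (hW U hU).2 (hW U' hU').2
      (infDist_lt_of_bump_ne_zero hx).le (infDist_lt_of_bump_ne_zero hx').le

noncomputable def bumpSum (r : ℝ) (S : ι → Finset (Set X)) (x : X) : ℝ :=
  ∑ l, ∑ U ∈ S l, bump r U x

noncomputable def normBump (r : ℝ) (S : ι → Finset (Set X)) (U : Set X) (x : X) : ℝ :=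
  bump r U x / bumpSum r S x

theorem bump_le_bumpSum {l : ι} (hU : U ∈ S l) (x : X) : bump r U x ≤ bumpSum r S x :=
  (Finset.single_le_sum (f := fun U => bump r U x) (fun _ _ => bump_nonneg) hU).trans <|
    Finset.single_le_sum (f := fun l => ∑ U ∈ S l, bump r U x)
      (fun _ _ => Finset.sum_nonneg fun _ _ => bump_nonneg) (Finset.mem_univ l)

theorem le_bumpSum (hr : 0 ≤ r) (hx : ∃ l, ∃ U ∈ S l, x ∈ U) : r ≤ bumpSum r S x := by
  obtain ⟨l, U, hU, hxU⟩ := hx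
  exact (bump_of_mem hr hxU).ge.trans (bump_le_bumpSum hU x)

theorem abs_bumpSum_sub_le
    (hS : ∀ l, (S l : Set (Set X)).PairwiseDisjoint fun U => support (bump r U)) (x y : X) :
    |bumpSum r S x - bumpSum r S y| ≤ 2 * Fintype.card ι * dist x y :=
  calc |bumpSum r S x - bumpSum r S y|
      = |∑ l, (∑ U ∈ S l, bump r U x - ∑ U ∈ S l, bump r U y)| := by
        rw [bumpSum, bumpSum, Finset.sum_sub_distrib]
    _ ≤ ∑ l, |∑ U ∈ S l, bump r U x - ∑ U ∈ S l, bump r U y| := Finset.abs_sum_le_sum_abs _ _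
    _ ≤ ∑ _l : ι, 2 * dist x y := Finset.sum_le_sum fun l _ =>
        Finset.abs_sum_sub_sum_le_of_pairwiseDisjoint (hS l) x y dist_nonneg
          fun _ _ => abs_bump_sub_le
    _ = 2 * Fintype.card ι * dist x y := by simp; ring

theorem normBump_nonneg : 0 ≤ normBump r S U x :=
  div_nonneg bump_nonneg <| Finset.sum_nonneg fun _ _ => Finset.sum_nonneg fun _ _ => bump_nonneg

theorem sum_sum_normBump (hx : bumpSum r S x ≠ 0) : ∑ l, ∑ U ∈ S l, normBump r S U x = 1 := by
  simp_rw [normBump, ← Finset.sum_div]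
  exact div_self hx

theorem continuous_bumpSum : Continuous (bumpSum r S) :=
  continuous_finsetSum _ fun _ _ => continuous_finsetSum _ fun _ _ => lipschitzWith_bump.continuous

theorem sum_normBump_le_one (hx : bumpSum r S x ≠ 0) (l : ι) :
    ∑ U ∈ S l, normBump r S U x ≤ 1 :=
  (Finset.single_le_sum (f := fun l => ∑ U ∈ S l, normBump r S U x)
    (fun _ _ => Finset.sum_nonneg fun _ _ => normBump_nonneg) (Finset.mem_univ l)).trans_eq
    (sum_sum_normBump hx)

theorem abs_normBump_sub_le (hr : 0 < r)
    (hS : ∀ l, (S l : Set (Set X)).PairwiseDisjoint fun U => support (bump r U)) {l : ι}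
    (hU : U ∈ S l) (hx : r ≤ bumpSum r S x) (hy : r ≤ bumpSum r S y) :
    |normBump r S U x - normBump r S U y| ≤ (2 * Fintype.card ι + 1) / r * dist x y :=
  calc |normBump r S U x - normBump r S U y|
      ≤ (|bump r U x - bump r U y| + |bumpSum r S x - bumpSum r S y|) / r :=
        abs_div_sub_div_le hr hx hy bump_nonneg (bump_le_bumpSum hU y)
    _ ≤ (dist x y + 2 * Fintype.card ι * dist x y) / r := by
        gcongr
        exacts [abs_bump_sub_le, abs_bumpSum_sub_le hS x y]
    _ = (2 * Fintype.card ι + 1) / r * dist x y := by ring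

end BumpSum

section Cutoff

noncomputable def cutoff (a T t : ℝ) : ℝ :=
  projIcc 0 1 zero_le_one ((a + T - t) / T)

variable {a T t t' : ℝ}

theorem cutoff_mem_Icc : cutoff a T t ∈ Icc 0 1 :=
  (projIcc 0 1 zero_le_one _).2

theorem cutoff_of_le (hT : 0 < T) (ht : t ≤ a) : cutoff a T t = 1 := by
  rw [cutoff, projIcc_of_right_le]
  rw [le_div_iff₀ hT]; linarith

theorem cutoff_of_add_le (hT : 0 ≤ T) (ht : a + T ≤ t) : cutoff a T t = 0 := by
  rw [cutoff, projIcc_of_le_left]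
  exact div_nonpos_of_nonpos_of_nonneg (by linarith) hT

theorem abs_cutoff_sub_le (hT : 0 < T) : |cutoff a T t - cutoff a T t'| ≤ |t - t'| / T :=
  (abs_projIcc_sub_projIcc _).trans_eq <| by
    rw [← sub_div, abs_div, abs_of_pos hT, abs_sub_comm]; ring_nf

theorem continuous_cutoff : Continuous (cutoff a T) :=
  continuous_subtype_val.comp <| continuous_projIcc.comp <| by fun_prop

end Cutoff

section CutoffNear

variable {G : Type*} [PseudoMetricSpace G] {f : G → ℝ} {c : G} {a T : ℝ}

noncomputable def cutoffNear (f : G → ℝ) (c : G) (a T : ℝ) (g : G) : ℝ :=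
  f g * cutoff a T (dist g c)

theorem tsupport_cutoffNear_subset (hT : 0 ≤ T) :
    tsupport (cutoffNear f c a T) ⊆ tsupport f ∩ closedBall c (a + T) := by
  refine subset_inter tsupport_mul_subset_left <| tsupport_mul_subset_right.trans <|
    closure_minimal (fun g hg => ?_) isClosed_closedBall
  by_contra hfar
  exact hg (cutoff_of_add_le hT (not_le.1 hfar).le)

theorem hasCompactSupport_cutoffNear [ProperSpace G] (hT : 0 ≤ T) :
    HasCompactSupport (cutoffNear f c a T) :=
  (isCompact_closedBall c (a + T)).of_isClosed_subset (isClosed_tsupport _)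
    ((tsupport_cutoffNear_subset hT).trans inter_subset_right)

theorem Continuous.cutoffNear (hf : Continuous f) : Continuous (cutoffNear f c a T) :=
  hf.mul <| continuous_cutoff.comp <| continuous_id.dist continuous_const

theorem cutoffNear_mem_Icc (hf : ∀ g, f g ∈ Icc 0 1) (g : G) : cutoffNear f c a T g ∈ Icc 0 1 :=
  ⟨mul_nonneg (hf g).1 cutoff_mem_Icc.1, mul_le_one₀ (hf g).2 cutoff_mem_Icc.1 cutoff_mem_Icc.2⟩

theorem cutoffNear_le (hf : ∀ g, 0 ≤ f g) (g : G) : cutoffNear f c a T g ≤ f g :=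
  mul_le_of_le_one_right (hf g) cutoff_mem_Icc.2

theorem abs_cutoffNear_sub_le (hT : 0 < T) (hf : ∀ g, f g ∈ Icc 0 1) (g g' : G) :
    |cutoffNear f c a T g - cutoffNear f c a T g'| ≤ |f g - f g'| + dist g g' / T := by
  have hf' : |f g'| ≤ 1 := abs_le.2 ⟨by linarith [(hf g').1], (hf g').2⟩
  have hβ : |cutoff a T (dist g c)| ≤ 1 := by
    have := cutoff_mem_Icc (a := a) (T := T) (t := dist g c)
    exact abs_le.2 ⟨by linarith [this.1], this.2⟩
  refine (abs_mul_sub_mul_le_of_abs_le_one hf' hβ).trans (add_le_add le_rfl ?_)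
  exact (abs_cutoff_sub_le hT).trans (by gcongr; exact abs_dist_sub_le g g' c)

theorem hasSum_cutoffNear [Group G] {H : Subgroup G} (hT : 0 < T)
    (hf : ∀ g, ∀ h ∈ H, f (g * h) = f g)
    (hnear : ∀ g, f g ≠ 0 → ∃ h ∈ H, dist (g * h) c ≤ a)
    (hinj : InjOn (QuotientGroup.mk : G → G ⧸ H) (closedBall c (a + T))) (g : G) :
    HasSum (fun h : H => cutoffNear f c a T (g * h)) (f g) := by
  by_cases hg : f g = 0
  · simp [cutoffNear, hf g _ (Subtype.prop _), hg, hasSum_zero]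
  obtain ⟨h₀, hh₀, hd⟩ := hnear g hg
  convert hasSum_single (⟨h₀, hh₀⟩ : H) fun h hne => ?_ using 1
  · simp [cutoffNear, hf g h₀ hh₀, cutoff_of_le hT hd]
  -- only the sheet through `c` meets the injectivity ball
  refine mul_eq_zero_of_right _ (cutoff_of_add_le hT.le <| not_lt.1 fun hlt => hne ?_)
  refine Subtype.ext <| mul_left_cancel (a := g) <| hinj (mem_closedBall.2 hlt.le)
    (mem_closedBall.2 (hd.trans (by linarith))) ?_
  rw [QuotientGroup.mk_mul_of_mem g h.2, QuotientGroup.mk_mul_of_mem g hh₀]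

end CutoffNear

theorem mul_mem_tsupport_of_forall_mul_eq {G : Type*} [Group G] [TopologicalSpace G]
    [ContinuousConstSMul Gᵐᵒᵖ G] {f : G → ℝ} {h : G} (hf : ∀ g, f (g * h) = f g) {g : G}
    (hg : g ∈ tsupport f) : g * h ∈ tsupport f := by
  have hcont : Continuous fun g : G => g * h := continuous_const_smul (MulOpposite.op h)
  have hcomp : f ∘ (fun g : G => g * h) = f := funext hf
  exact tsupport_comp_subset_preimage f hcont (hcomp.symm ▸ hg)

section SheetFamily

variable {G ι : Type*} [Group G] [PseudoMetricSpace G]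

structure IsSheetFamily (H : Subgroup G) (s : Finset ι) (f : ι → G → ℝ) (c : ι → G)
    (a T : ℝ) : Prop where
  width_pos : 0 < T
  continuous : ∀ i ∈ s, Continuous (f i)
  nonneg : ∀ i ∈ s, ∀ g, 0 ≤ f i g
  sum_le_one : ∀ g, ∑ i ∈ s, f i g ≤ 1
  map_mul : ∀ i ∈ s, ∀ g, ∀ h ∈ H, f i (g * h) = f i g
  pairwiseDisjoint : (s : Set ι).PairwiseDisjoint fun i => tsupport (f i)
  exists_near : ∀ i ∈ s, ∀ g, f i g ≠ 0 → ∃ h ∈ H, dist (g * h) (c i) ≤ a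
  injOn : ∀ i ∈ s, InjOn (QuotientGroup.mk : G → G ⧸ H) (closedBall (c i) (a + T))

namespace IsSheetFamily

variable {H : Subgroup G} {s : Finset ι} {f : ι → G → ℝ} {c : ι → G} {a T : ℝ}

theorem mem_Icc (hF : IsSheetFamily H s f c a T) {i : ι} (hi : i ∈ s) (g : G) :
    f i g ∈ Icc 0 1 :=
  ⟨hF.nonneg i hi g,
    (Finset.single_le_sum (f := (f · g)) (hF.nonneg · · g) hi).trans
      (hF.sum_le_one g)⟩

theorem continuous_sum (hF : IsSheetFamily H s f c a T) :
    Continuous fun g => ∑ i ∈ s, cutoffNear (f i) (c i) a T g :=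
  continuous_finsetSum s fun i hi => (hF.continuous i hi).cutoffNear

theorem hasCompactSupport_sum [ProperSpace G] (hF : IsSheetFamily H s f c a T) :
    HasCompactSupport fun g => ∑ i ∈ s, cutoffNear (f i) (c i) a T g := by
  simpa only [← Finset.sum_apply] using
    HasCompactSupport.finset_sum (s := s) fun i _ =>
      hasCompactSupport_cutoffNear (f := f i) (c := c i) (a := a) hF.width_pos.le

theorem sum_mem_Icc (hF : IsSheetFamily H s f c a T) (g : G) :
    ∑ i ∈ s, cutoffNear (f i) (c i) a T g ∈ Icc 0 1 :=
  ⟨Finset.sum_nonneg fun _ hi => (cutoffNear_mem_Icc (hF.mem_Icc hi) g).1,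
    (Finset.sum_le_sum fun i hi => cutoffNear_le (hF.nonneg i hi) g).trans (hF.sum_le_one g)⟩

theorem hasSum_sum (hF : IsSheetFamily H s f c a T) (g : G) :
    HasSum (fun h : H => ∑ i ∈ s, cutoffNear (f i) (c i) a T (g * h)) (∑ i ∈ s, f i g) :=
  _root_.hasSum_sum fun i hi =>
    hasSum_cutoffNear hF.width_pos (hF.map_mul i hi) (hF.exists_near i hi) (hF.injOn i hi) g

theorem disjoint_tsupport_sum_mul [ContinuousConstSMul Gᵐᵒᵖ G] (hF : IsSheetFamily H s f c a T)
    {h : G} (hh : h ∈ H) (h1 : h ≠ 1) :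
    Disjoint (tsupport fun g => ∑ i ∈ s, cutoffNear (f i) (c i) a T g)
      ((fun g => g * h) '' tsupport fun g => ∑ i ∈ s, cutoffNear (f i) (c i) a T g) := by
  have hsub : (tsupport fun g => ∑ i ∈ s, cutoffNear (f i) (c i) a T g) ⊆
      ⋃ i ∈ s, tsupport (f i) ∩ closedBall (c i) (a + T) := by
    refine (closure_mono (Finset.support_sum _ _)).trans ?_
    rw [Finset.closure_biUnion]
    exact iUnion₂_mono fun i _ => tsupport_cutoffNear_subset hF.width_pos.le
  refine Set.disjoint_left.2 ?_
  rintro _ hgh ⟨g, hg, rfl⟩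
  obtain ⟨i, hi, hghi, hghc⟩ := mem_iUnion₂.1 (hsub hgh)
  obtain ⟨j, hj, hgj, hgc⟩ := mem_iUnion₂.1 (hsub hg)
  obtain rfl : i = j := hF.pairwiseDisjoint.elim hi hj <| not_disjoint_iff.2
    ⟨g * h, hghi, mul_mem_tsupport_of_forall_mul_eq (hF.map_mul j hj · h hh) hgj⟩
  refine h1 (mul_left_cancel (a := g) ?_)
  rw [mul_one]
  exact hF.injOn i hi hghc hgc (QuotientGroup.mk_mul_of_mem g hh)

theorem abs_sum_sub_le (hF : IsSheetFamily H s f c a T) {L : ℝ} (hL : 0 ≤ L)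
    (hf : ∀ i ∈ s, ∀ g g', |f i g - f i g'| ≤ L * dist g g') (g g' : G) :
    |∑ i ∈ s, cutoffNear (f i) (c i) a T g - ∑ i ∈ s, cutoffNear (f i) (c i) a T g'| ≤
      2 * (L + 1 / T) * dist g g' := by
  have hdisj : (s : Set ι).PairwiseDisjoint fun i => support (cutoffNear (f i) (c i) a T) :=
    hF.pairwiseDisjoint.mono fun i =>
      (support_mul_subset_left _ _).trans (subset_tsupport _)
  rw [mul_assoc]
  refine Finset.abs_sum_sub_sum_le_of_pairwiseDisjoint hdisj g g'
    (by have := hF.width_pos; positivity) fun i hi => ?_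
  calc _ ≤ |f i g - f i g'| + dist g g' / T := abs_cutoffNear_sub_le hF.width_pos (hF.mem_Icc hi) g g'
    _ ≤ L * dist g g' + dist g g' / T := by gcongr; exact hf i hi g g'
    _ = (L + 1 / T) * dist g g' := by ring

end IsSheetFamily

end SheetFamily

section Lift

variable {G X : Type*} [Group G] [PseudoMetricSpace G] [PseudoMetricSpace X]

structure IsQuotientDistMap (H : Subgroup G) (p : G → X) : Prop where
  map_mul : ∀ g, ∀ h ∈ H, p (g * h) = p g
  dist_le : ∀ g g', dist (p g) (p g') ≤ dist g g'
  exists_dist_mul_lt : ∀ g g' ε, dist (p g) (p g') < ε → ∃ h ∈ H, dist g (g' * h) < ε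

theorem IsQuotientDistMap.lipschitzWith {H : Subgroup G} {p : G → X}
    (hp : IsQuotientDistMap H p) : LipschitzWith 1 p :=
  LipschitzWith.of_dist_le_mul fun g g' => by simpa using hp.dist_le g g'

theorem IsSeparatedFamily.finite_setOf_near {r : ℝ} {V : Set (Set X)}
    (hV : IsSeparatedFamily (4 * r) V) (hr : 0 < r) {H : Subgroup G} (hH : IsCocompactSubgroup H)
    {p : G → X} (hp : IsQuotientDistMap H p) :
    {U ∈ V | ∃ g, ∃ u ∈ U, dist (p g) u < r}.Finite := by
  obtain ⟨K, hK, hKH⟩ := hH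
  obtain ⟨t, -, ht, hKt⟩ := hK.finite_cover_balls hr
  refine (ht.biUnion fun k _ =>
    (hV.subsingleton_near (ρ := 2 * r) (by linarith) (p k)).finite).subset ?_
  rintro U ⟨hU, g, u, hu, hgu⟩
  obtain ⟨k, hk, h, hh, rfl⟩ := Set.mem_mul.1 (hKH ▸ Set.mem_univ g)
  obtain ⟨k₀, hk₀, hkk₀⟩ := Set.mem_iUnion₂.1 (hKt hk)
  refine Set.mem_biUnion hk₀ ⟨hU, u, hu, ?_⟩
  rw [hp.map_mul k h hh] at hgu
  calc dist (p k₀) u ≤ dist (p k₀) (p k) + dist (p k) u := dist_triangle _ _ _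
    _ < r + r := add_lt_add_of_le_of_lt ((hp.dist_le k₀ k).trans
        (dist_comm k₀ k ▸ (mem_ball.1 hkk₀).le)) hgu
    _ = 2 * r := by ring

end Lift

section Level

variable {G X ι : Type*} [Group G] [PseudoMetricSpace G] [PseudoMetricSpace X] [Fintype ι]

theorem isSheetFamily_normBump {H : Subgroup G} {p : G → X} (hp : IsQuotientDistMap H p)
    {V : Set (Set X)} {r B T : ℝ} (hr : 0 < r) (hT : 0 < T) (hsep : IsSeparatedFamily (4 * r) V)
    (hdiam : ∀ U ∈ V, ∀ x ∈ U, ∀ y ∈ U, dist x y ≤ B)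
    (hinj : ∀ c, InjOn (QuotientGroup.mk : G → G ⧸ H) (closedBall c (B + 2 * r + T)))
    {S : ι → Finset (Set X)} (hΦ : ∀ g, r ≤ bumpSum r S (p g)) {l : ι} (hS : ∀ U ∈ S l, U ∈ V)
    {c : Set X → G} (hc : ∀ U ∈ S l, ∃ u ∈ U, dist (p (c U)) u < r) :
    IsSheetFamily H (S l) (fun U g => normBump r S U (p g)) c (B + 2 * r) T := by
  have hpc := hp.lipschitzWith.continuous
  have hne : ∀ U ∈ S l, U.Nonempty := fun U hU => let ⟨u, hu, _⟩ := hc U hU; ⟨u, hu⟩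
  have hnear : ∀ U ∈ S l, ∀ g, normBump r S U (p g) ≠ 0 → infDist (p g) U < r :=
    fun U _ g hg => infDist_lt_of_bump_ne_zero fun h0 => hg (by simp [normBump, h0])
  have htsupport : ∀ U ∈ S l,
      tsupport (fun g => normBump r S U (p g)) ⊆ {g | infDist (p g) U ≤ r} := fun U hU =>
    closure_minimal (fun g hg => (hnear U hU g hg).le)
      (isClosed_le (continuous_infDist_pt U |>.comp hpc) continuous_const)
  refine ⟨hT, fun U _ => ?_, fun _ _ _ => normBump_nonneg,
    fun g => sum_normBump_le_one (hr.trans_le (hΦ g)).ne' l,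
    fun U _ g h hh => by simp only [hp.map_mul g h hh], fun U hU U' hU' hUU' => ?_,
    fun U hU g hg => ?_, fun U _ => hinj (c U)⟩
  · exact ((lipschitzWith_bump.comp hp.lipschitzWith).continuous.div
      (continuous_bumpSum.comp hpc) fun g => (hr.trans_le (hΦ g)).ne')
  · refine Set.disjoint_left.2 fun g hg hg' => hUU' ?_
    exact hsep.eq_of_infDist_le hr le_rfl (hS U hU) (hS U' hU') (hne U hU) (hne U' hU')
      (htsupport U hU hg) (htsupport U' hU' hg')
  · obtain ⟨u, hu, hcu⟩ := hc U hU
    obtain ⟨u', hu', hgu'⟩ := (infDist_lt_iff (hne U hU)).1 (hnear U hU g hg)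
    have hclose : dist (p (c U)) (p g) < B + 2 * r :=
      calc dist (p (c U)) (p g) ≤ dist (p (c U)) u + dist u u' + dist u' (p g) :=
            dist_triangle4 _ _ _ _
        _ < r + B + r := by
            linarith [hdiam U (hS U hU) u hu u' hu', dist_comm u' (p g)]
        _ = B + 2 * r := by ring
    obtain ⟨h, hh, hdist⟩ := hp.exists_dist_mul_lt _ _ _ hclose
    exact ⟨h, hh, (dist_comm (g * h) (c U)).trans_le hdist.le⟩

theorem exists_sheet_partition [ProperSpace G] [ContinuousConstSMul Gᵐᵒᵖ G] {H : Subgroup G}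
    (hH : IsCocompactSubgroup H) {p : G → X} (hp : IsQuotientDistMap H p) {V : ι → Set (Set X)}
    {r B T : ℝ} (hr : 0 < r) (hT : 0 < T) (hcover : ∀ x, ∃ l, ∃ U ∈ V l, x ∈ U)
    (hdiam : ∀ l, ∀ U ∈ V l, ∀ x ∈ U, ∀ y ∈ U, dist x y ≤ B)
    (hsep : ∀ l, IsSeparatedFamily (4 * r) (V l))
    (hinj : ∀ c, InjOn (QuotientGroup.mk : G → G ⧸ H) (closedBall c (B + 2 * r + T))) :
    ∃ μ : ι → G → ℝ, (∀ l, Continuous (μ l)) ∧ (∀ l, HasCompactSupport (μ l)) ∧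
      (∀ l g, μ l g ∈ Icc 0 1) ∧
      (∀ l, ∀ h ∈ H, h ≠ 1 → Disjoint (tsupport (μ l)) ((fun g => g * h) '' tsupport (μ l))) ∧
      (∀ g, ∑ l, ∑' h : H, μ l (g * h) = 1) ∧
      (∀ l g g', |μ l g - μ l g'| ≤ 2 * ((2 * Fintype.card ι + 1) / r + 1 / T) * dist g g') := by
  classical
  have hfin l := (hsep l).finite_setOf_near hr hH hp
  set S : ι → Finset (Set X) := fun l => (hfin l).toFinset
  have hS : ∀ l, ∀ U ∈ S l, U ∈ V l ∧ ∃ g, ∃ u ∈ U, dist (p g) u < r :=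
    fun l _ hU => (hfin l).mem_toFinset.1 hU
  choose! c hc using fun l U hU => (hS l U hU).2
  have hΦ : ∀ g, r ≤ bumpSum r S (p g) := fun g => le_bumpSum hr.le <| by
    obtain ⟨l, U, hU, hgU⟩ := hcover (p g)
    exact ⟨l, U, (hfin l).mem_toFinset.2 ⟨hU, g, p g, hgU, by simpa using hr⟩, hgU⟩
  have hdisj l : (S l : Set (Set X)).PairwiseDisjoint fun U => support (bump r U) :=
    (hsep l).pairwiseDisjoint_support_bump hr le_rfl fun U hU =>
      ⟨(hS l U hU).1, let ⟨_, u, hu, _⟩ := (hS l U hU).2; ⟨u, hu⟩⟩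
  have hF l := isSheetFamily_normBump hp hr hT (hsep l) (hdiam l) hinj hΦ
    (fun U hU => (hS l U hU).1) (hc l)
  refine ⟨fun l g => ∑ U ∈ S l,
      cutoffNear (fun g => normBump r S U (p g)) (c l U) (B + 2 * r) T g, fun l => (hF l).continuous_sum, fun l => (hF l).hasCompactSupport_sum,
    fun l => (hF l).sum_mem_Icc, fun l _ hh h1 => (hF l).disjoint_tsupport_sum_mul hh h1,
    fun g => ?_, fun l => (hF l).abs_sum_sub_le (by positivity) fun U hU g g' => ?_⟩
  · simp_rw [((hF _).hasSum_sum g).tsum_eq]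
    exact sum_sum_normBump (hr.trans_le (hΦ g)).ne'
  · exact (abs_normBump_sub_le hr hdisj hU (hΦ g) (hΦ g')).trans
      (by gcongr; exact hp.dist_le g g')

end Level

namespace IsBoxMetric

variable {G : Type*} [Group G] [TopologicalSpace G] {dG : PRICMetric G} {Gseq : ℕ → Subgroup G}
  {dB : ((n : ℕ) × (G ⧸ Gseq n)) → ((n : ℕ) × (G ⧸ Gseq n)) → ℝ}

abbrev toPseudoMetricSpace (hdB : IsBoxMetric dG Gseq dB) :
    PseudoMetricSpace ((n : ℕ) × (G ⧸ Gseq n)) where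
  dist := dB
  dist_self := hdB.1
  dist_comm := hdB.2.1
  dist_triangle := hdB.2.2.1

theorem isQuotientDistMap (hdB : IsBoxMetric dG Gseq dB) (n : ℕ) :
    letI := dG.toMetricSpace
    letI := hdB.toPseudoMetricSpace
    IsQuotientDistMap (Gseq n) fun g => (⟨n, QuotientGroup.mk g⟩ : (m : ℕ) × (G ⧸ Gseq m)) := by
  let _ := dG.toMetricSpace
  let _ := hdB.toPseudoMetricSpace
  refine ⟨fun g h hh => ?_, fun g g' => ?_, fun g g' ε hlt => ?_⟩
  · rw [QuotientGroup.mk_mul_of_mem g hh]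
  · exact (hdB.2.2.2.1 n g g').trans_le (dG.quotDist_le _ g g')
  · exact dG.exists_d_mul_lt_of_quotDist_lt ((hdB.2.2.2.1 n g g').symm.trans_lt hlt)

end IsBoxMetric

theorem partition_of_unity_of_finite_asdim_box_space_general
    {G : Type*} [Group G] [TopologicalSpace G]
    (dG : PRICMetric G)
    (Gseq : ℕ → Subgroup G)
    (hcc : ∀ n, IsCocompactSubgroup (Gseq n))
    (hreg : ∀ F : Set G, IsCompact F → ∃ n, ∀ k : G,
      Set.InjOn (QuotientGroup.mk : G → G ⧸ Gseq n) ((fun x => x * k) '' F))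
    (dB : ((n : ℕ) × (G ⧸ Gseq n)) → ((n : ℕ) × (G ⧸ Gseq n)) → ℝ)
    (hdB : IsBoxMetric dG Gseq dB)
    (s : ℕ)
    (hasdim : ∀ R : ℝ, 0 < R → ∃ B : ℝ, 0 < B ∧
      ∃ V : Fin (s + 1) → Set (Set ((n : ℕ) × (G ⧸ Gseq n))),
        (∀ l, ∀ U ∈ V l, ∀ x ∈ U, ∀ y ∈ U, dB x y ≤ B) ∧
        (∀ S : Set ((n : ℕ) × (G ⧸ Gseq n)), (∀ x ∈ S, ∀ y ∈ S, dB x y ≤ R) →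
          ∃ l, ∃ U ∈ V l, S ⊆ U) ∧
        (∀ l, ∀ U ∈ V l, ∀ U' ∈ V l, U ≠ U' → ∀ x ∈ U, ∀ y ∈ U', R < dB x y)) :
    ∀ ε : ℝ, 0 < ε → ∀ M : Set G, IsCompact M →
      ∃ n : ℕ, ∃ μ : Fin (s + 1) → G → ℝ,
        (∀ l, Continuous (μ l)) ∧
        (∀ l, HasCompactSupport (μ l)) ∧
        (∀ l g, μ l g ∈ Set.Icc (0 : ℝ) 1) ∧
        (∀ l, ∀ h ∈ Gseq n, h ≠ 1 →
          Disjoint (tsupport (μ l)) ((fun g => g * h) '' tsupport (μ l))) ∧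
        (∀ g : G, ∑ l : Fin (s + 1), ∑' h : (Gseq n), μ l (g * (h : G)) = 1) ∧
        (∀ l, ∀ g ∈ M, ∀ h : G, |μ l h - μ l (g * h)| ≤ ε) := by
  intro ε hε M hM
  let _ := dG.toMetricSpace
  have := dG.properSpace
  have := dG.isIsometricSMul_op
  let _ := hdB.toPseudoMetricSpace
  obtain ⟨C, hC, hMC⟩ := hM.isBounded.subset_closedBall_lt 0 (1 : G)
  -- chosen so that the Lipschitz constant of `exists_sheet_partition` times `C` is `ε`
  set r := 4 * (2 * (s + 1) + 1) * C / ε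
  set T := 4 * C / ε
  obtain ⟨B, -, V, hdiam, hcover, hsep⟩ := hasdim (4 * r) (by positivity)
  obtain ⟨n, hn⟩ := hreg _ (isCompact_closedBall (1 : G) (B + 2 * r + T))
  obtain ⟨μ, hcont, hsupp, hmem, hdisj, hsum, hlip⟩ :=
    exists_sheet_partition (hcc n) (hdB.isQuotientDistMap n) (by positivity : 0 < r)
      (by positivity : 0 < T)
      (fun x => let ⟨l, U, hU, hxU⟩ := hcover {x} (by rintro _ rfl _ rfl; rw [hdB.1]; positivity)
        ⟨l, U, hU, hxU rfl⟩)
      hdiam hsep (fun c => by simpa [image_mul_right] using hn c)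
  refine ⟨n, μ, hcont, hsupp, hmem, hdisj, hsum, fun l g hg h => (hlip l h (g * h)).trans ?_⟩
  have hgh : dist h (g * h) ≤ C :=
    calc dist h (g * h) = dist 1 g := by rw [← dist_mul_right 1 g h, one_mul]
      _ = dist g 1 := dist_comm _ _
      _ ≤ C := hMC hg
  calc _ ≤ 2 * ((2 * (s + 1) + 1) / r + 1 / T) * C := by
        rw [Fintype.card_fin]; push_cast; gcongr
    _ = ε := by simp only [r, T]; field_simp; ring

/-- If the box space of a regular residually compact approximation `(Gₙ)`
of `G` has asymptotic dimension at most `s`, then for every `ε > 0` and compact `M ⊆ G` there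
are `n` and continuous compactly supported `μ₀, …, μ_s : G → [0,1]` whose supports are
`Gₙ`-disjoint, whose `Gₙ`-translates over all `l` form a partition of unity, and which are
`ε`-invariant under left translation by elements of `M`. -/
theorem partition_of_unity_of_finite_asdim_box_space
    {G : Type*} [Group G] [TopologicalSpace G] [IsTopologicalGroup G]
    [LocallyCompactSpace G] [T2Space G] [SecondCountableTopology G]
    (dG : PRICMetric G)
    (Gseq : ℕ → Subgroup G)
    (hclosed : ∀ n, IsClosed ((Gseq n : Set G)))
    (hcc : ∀ n, IsCocompactSubgroup (Gseq n))
    (hinter : (⋂ n, ((Gseq n) : Set G)) = {1})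
    (hreg : ∀ F : Set G, IsCompact F → ∃ n, ∀ k : G,
      Set.InjOn (QuotientGroup.mk : G → G ⧸ Gseq n) ((fun x => x * k) '' F))
    (dB : ((n : ℕ) × (G ⧸ Gseq n)) → ((n : ℕ) × (G ⧸ Gseq n)) → ℝ)
    (hdB : IsBoxMetric dG Gseq dB)
    (s : ℕ)
    (hasdim : ∀ R : ℝ, 0 < R → ∃ B : ℝ, 0 < B ∧
      ∃ V : Fin (s + 1) → Set (Set ((n : ℕ) × (G ⧸ Gseq n))),
        (∀ l, ∀ U ∈ V l, ∀ x ∈ U, ∀ y ∈ U, dB x y ≤ B) ∧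
        (∀ S : Set ((n : ℕ) × (G ⧸ Gseq n)), (∀ x ∈ S, ∀ y ∈ S, dB x y ≤ R) →
          ∃ l, ∃ U ∈ V l, S ⊆ U) ∧
        (∀ l, ∀ U ∈ V l, ∀ U' ∈ V l, U ≠ U' → ∀ x ∈ U, ∀ y ∈ U', R < dB x y)) :
    ∀ ε : ℝ, 0 < ε → ∀ M : Set G, IsCompact M →
      ∃ n : ℕ, ∃ μ : Fin (s + 1) → G → ℝ,
        (∀ l, Continuous (μ l)) ∧
        (∀ l, HasCompactSupport (μ l)) ∧
        (∀ l g, μ l g ∈ Set.Icc (0 : ℝ) 1) ∧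
        (∀ l, ∀ h ∈ Gseq n, h ≠ 1 →
          Disjoint (tsupport (μ l)) ((fun g => g * h) '' tsupport (μ l))) ∧
        (∀ g : G, ∑ l : Fin (s + 1), ∑' h : (Gseq n), μ l (g * (h : G)) = 1) ∧
        (∀ l, ∀ g ∈ M, ∀ h : G, |μ l h - μ l (g * h)| ≤ ε) :=
  partition_of_unity_of_finite_asdim_box_space_general dG Gseq hcc hreg dB hdB s hasdim
end

section
/- Let G be a second countable locally compact Hausdorff residually compact group equipped with a proper, right-invariant, compatible metric d, let σ = (G_n)_{n∈ℕ} be a regular residually compact approximation of G, and let d^B be a box metric on X = ⨆_{n∈ℕ} G/G_n. Let s ∈ ℕ and suppose (X, d^B) has asymptotic dimension at most s: for every R > 0 there exist B > 0 and families 𝒱⁰, …, 𝒱ˢ of subsets of X whose members have diameter at most B, such that every subset of X of diameter at most R is contained in some member and any two distinct members of each 𝒱ˡ lie at distance greater than R. Then the metric space (G, d) has asymptotic dimension at most s: for every R > 0 there exist B' > 0 and families 𝒰⁰, …, 𝒰ˢ of subsets of G whose members have diameter at most B', such that every subset of G of diameter at most R is contained in some member of 𝒰⁰ ∪ … ∪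 𝒰ˢ and any two distinct members of each 𝒰ˡ lie at distance greater than R. -/
/-!
Regularity gives an `n` for which `G → G/Gₙ` is injective on every right translate of the
ball of radius `2(B + R)`. Then no nontrivial element of `Gₙ` moves a point by at most
`2(B + R)`, so `g ↦ gGₙ`, viewed in the `n`-th piece of the box space, is `1`-Lipschitz and
isometric at scale `B + R`. Pulling back an `(R, B)`-cover of the box space along this map and
splitting preimages into their `R`-chain components gives an `(R, 2B)`-cover of `G`: along a
chain starting at `g` the distance to `g` never exceeds `B + R`, hence is read off isometrically
in the box space and is at most `B`.
-/

open Pointwise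

def IsAsdimCover {X : Type*} {s : ℕ} (d : X → X → ℝ) (R B : ℝ)
    (V : Fin (s + 1) → Set (Set X)) : Prop :=
  (∀ l, ∀ U ∈ V l, ∀ x ∈ U, ∀ y ∈ U, d x y ≤ B) ∧
  (∀ S : Set X, (∀ x ∈ S, ∀ y ∈ S, d x y ≤ R) → ∃ l, ∃ U ∈ V l, S ⊆ U) ∧
  (∀ l, ∀ U ∈ V l, ∀ U' ∈ V l, U ≠ U' → ∀ x ∈ U, ∀ y ∈ U', R < d x y)

section ChainComponent

variable {X Y : Type*} (f : X → Y) (d : X → X → ℝ) (R : ℝ) (W : Set Y)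

def chainStep (a b : X) : Prop :=
  f a ∈ W ∧ f b ∈ W ∧ d a b ≤ R

def chainComponent (g : X) : Set X :=
  {x | Relation.ReflTransGen (chainStep f d R W) g x}

variable {f d R W}

theorem apply_mem_of_mem_chainComponent {g x : X} (hg : f g ∈ W)
    (hx : x ∈ chainComponent f d R W g) : f x ∈ W := by
  induction hx with
  | refl => exact hg
  | tail _ hstep => exact hstep.2.1

theorem chainComponent_eq_of_mem (hsymm : ∀ x y, d x y = d y x) {g y : X}
    (hy : y ∈ chainComponent f d R W g) :
    chainComponent f d R W y = chainComponent f d R W g := by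
  have : Std.Symm (chainStep f d R W) :=
    ⟨fun a b ⟨ha, hb, hab⟩ => ⟨hb, ha, hsymm a b ▸ hab⟩⟩
  ext x
  exact ⟨hy.trans, (symm hy).trans⟩

theorem dist_le_of_mem_chainComponent {dY : Y → Y → ℝ} {B : ℝ}
    (hself : ∀ x, d x x = 0) (htri : ∀ x y z, d x z ≤ d x y + d y z) (hB : 0 ≤ B)
    (hiso : ∀ x y, d x y ≤ B + R → dY (f x) (f y) = d x y)
    (hW : ∀ y ∈ W, ∀ y' ∈ W, dY y y' ≤ B) {g x : X} (hg : f g ∈ W)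
    (hx : x ∈ chainComponent f d R W g) : d g x ≤ B := by
  induction hx with
  | refl => rwa [hself]
  | @tail b c _ hstep ih =>
    have hgc : d g c ≤ B + R := (htri g b c).trans (add_le_add ih hstep.2.2)
    exact hiso g c hgc ▸ hW _ hg _ hstep.2.1

variable (f d R) in
/-- `∅` is included so that the empty set is covered even when no point of `X` maps into a
member of `V`. -/
def chainComponentCover {s : ℕ} (V : Fin (s + 1) → Set (Set Y)) :
    Fin (s + 1) → Set (Set X) :=
  fun l => insert ∅ {T | ∃ W ∈ V l, ∃ g, f g ∈ W ∧ T = chainComponent f d R W g}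

theorem IsAsdimCover.comap {dY : Y → Y → ℝ} {s : ℕ} {B : ℝ} {V : Fin (s + 1) → Set (Set Y)}
    (hV : IsAsdimCover dY R B V) (hself : ∀ x, d x x = 0) (hsymm : ∀ x y, d x y = d y x)
    (htri : ∀ x y z, d x z ≤ d x y + d y z) (hB : 0 ≤ B)
    (hle : ∀ x y, dY (f x) (f y) ≤ d x y)
    (hiso : ∀ x y, d x y ≤ B + R → dY (f x) (f y) = d x y) :
    IsAsdimCover d R (2 * B) (chainComponentCover f d R V) := by
  obtain ⟨hVdiam, hVcov, hVsep⟩ := hV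
  refine ⟨?diam, ?cover, ?sep⟩
  case diam =>
    rintro l T (rfl | ⟨W, hW, g, hg, rfl⟩) x hx y hy
    · exact absurd hx (Set.notMem_empty x)
    have hgx := dist_le_of_mem_chainComponent hself htri hB hiso (hVdiam l W hW) hg hx
    have hgy := dist_le_of_mem_chainComponent hself htri hB hiso (hVdiam l W hW) hg hy
    linarith [htri x g y, hsymm x g]
  case cover =>
    intro S hS
    rcases S.eq_empty_or_nonempty with rfl | ⟨g, hg⟩
    · exact ⟨0, ∅, Set.mem_insert _ _, Set.empty_subset _⟩
    obtain ⟨l, W, hW, hsub⟩ := hVcov (f '' S) (by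
      rintro _ ⟨a, ha, rfl⟩ _ ⟨b, hb, rfl⟩
      exact (hle a b).trans (hS a ha b hb))
    have hgW : f g ∈ W := hsub ⟨g, hg, rfl⟩
    refine ⟨l, chainComponent f d R W g, Set.mem_insert_of_mem _ ⟨W, hW, g, hgW, rfl⟩, ?_⟩
    exact fun x hx => .single ⟨hgW, hsub ⟨x, hx, rfl⟩, hS g hg x hx⟩
  case sep =>
    rintro l T (rfl | ⟨W, hW, g, hg, rfl⟩) T' (rfl | ⟨W', hW', g', hg', rfl⟩) hne x hx y hy
    all_goals try exact absurd hx (Set.notMem_empty x)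
    all_goals try exact absurd hy (Set.notMem_empty y)
    have hxW := apply_mem_of_mem_chainComponent hg hx
    have hyW' := apply_mem_of_mem_chainComponent hg' hy
    by_cases hWW : W = W'
    · subst hWW
      by_contra! hxy
      have hyx : y ∈ chainComponent f d R W x := .single ⟨hxW, hyW', hxy⟩
      apply hne
      rw [← chainComponent_eq_of_mem hsymm hx, ← chainComponent_eq_of_mem hsymm hy,
        chainComponent_eq_of_mem hsymm hyx]
    · exact (hVsep l W hW W' hW' hWW _ hxW _ hyW').trans_le (hle x y)

end ChainComponent

section QuotientMetric

variable {G : Type*} [Group G] [TopologicalSpace G] (M : PRICMetric G)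

theorem PRICMetric.d_nonneg_s14 (x y : G) : 0 ≤ M.d x y := by
  linarith [M.d_triangle x y x, M.d_self x, M.d_symm x y]

theorem quotDist_le_d (H : Subgroup G) (x y : G) : quotDist M H x y ≤ M.d x y := by
  refine csInf_le ⟨0, ?_⟩ ⟨1, H.one_mem, 1, H.one_mem, by rw [mul_one, mul_one]⟩
  rintro r ⟨h₁, -, h₂, -, rfl⟩
  exact M.d_nonneg_s14 _ _

variable {M} {H : Subgroup G} {r : ℝ}

/-- The points `x` and `(x h x⁻¹) x = x h` lie in the translate by `x` of the `r`-ball around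
`1` and have the same image in `G/H`. -/
theorem PRICMetric.mul_eq_self_of_d_le
    (hinj : ∀ k : G, Set.InjOn (QuotientGroup.mk : G → G ⧸ H)
      ((fun x => x * k) '' {y | M.d 1 y ≤ r}))
    {x h : G} (hh : h ∈ H) (hxh : M.d x (x * h) ≤ r) : x * h = x := by
  have hconj : M.d 1 (x * h * x⁻¹) ≤ r := by
    rwa [← M.right_invariant 1 _ x, one_mul, inv_mul_cancel_right]
  have hone : M.d 1 1 ≤ r := by
    rw [M.d_self]; exact (M.d_nonneg_s14 _ _).trans hxh
  have hmk : (QuotientGroup.mk (1 * x) : G ⧸ H) = QuotientGroup.mk (x * h * x⁻¹ * x) := by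
    rw [QuotientGroup.eq, inv_mul_cancel_right, one_mul, inv_mul_cancel_left]
    exact hh
  have := hinj x ⟨1, hone, rfl⟩ ⟨_, hconj, rfl⟩ hmk
  simp only [one_mul, inv_mul_cancel_right] at this
  exact this.symm

theorem quotDist_eq_d_of_le {C : ℝ}
    (hinj : ∀ k : G, Set.InjOn (QuotientGroup.mk : G → G ⧸ H)
      ((fun x => x * k) '' {y | M.d 1 y ≤ 2 * C}))
    {x y : G} (hxy : M.d x y ≤ C) : quotDist M H x y = M.d x y := by
  refine le_antisymm (quotDist_le_d M H x y) ?_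
  refine le_csInf ⟨_, 1, H.one_mem, 1, H.one_mem, by rw [mul_one, mul_one]⟩ ?_
  rintro _ ⟨h₁, hh₁, h₂, hh₂, rfl⟩
  rw [← M.right_invariant (x * h₁) (y * h₂) h₂⁻¹, mul_inv_cancel_right, mul_assoc]
  by_cases hC : M.d (x * (h₁ * h₂⁻¹)) y ≤ C
  · have hmove : M.d x (x * (h₁ * h₂⁻¹)) ≤ 2 * C := by
      linarith [M.d_triangle x y (x * (h₁ * h₂⁻¹)), M.d_symm y (x * (h₁ * h₂⁻¹))]
    rw [M.mul_eq_self_of_d_le hinj (H.mul_mem hh₁ (H.inv_mem hh₂)) hmove]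
  · linarith

end QuotientMetric

theorem asdim_le_of_asdim_box_space_le_general
    {G : Type*} [Group G] [TopologicalSpace G]
    (dG : PRICMetric G)
    (Gseq : ℕ → Subgroup G)
    (hreg : ∀ F : Set G, IsCompact F → ∃ n, ∀ k : G,
      Set.InjOn (QuotientGroup.mk : G → G ⧸ Gseq n) ((fun x => x * k) '' F))
    (dB : ((n : ℕ) × (G ⧸ Gseq n)) → ((n : ℕ) × (G ⧸ Gseq n)) → ℝ)
    (hdB : IsBoxMetric dG Gseq dB)
    (s : ℕ)
    (hasdim : ∀ R : ℝ, 0 < R → ∃ B : ℝ, 0 < B ∧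
      ∃ V : Fin (s + 1) → Set (Set ((n : ℕ) × (G ⧸ Gseq n))),
        (∀ l, ∀ U ∈ V l, ∀ x ∈ U, ∀ y ∈ U, dB x y ≤ B) ∧
        (∀ S : Set ((n : ℕ) × (G ⧸ Gseq n)), (∀ x ∈ S, ∀ y ∈ S, dB x y ≤ R) →
          ∃ l, ∃ U ∈ V l, S ⊆ U) ∧
        (∀ l, ∀ U ∈ V l, ∀ U' ∈ V l, U ≠ U' → ∀ x ∈ U, ∀ y ∈ U', R < dB x y)) :
    ∀ R : ℝ, 0 < R → ∃ B' : ℝ, 0 < B' ∧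
      ∃ U : Fin (s + 1) → Set (Set G),
        (∀ l, ∀ W ∈ U l, ∀ x ∈ W, ∀ y ∈ W, dG.d x y ≤ B') ∧
        (∀ S : Set G, (∀ x ∈ S, ∀ y ∈ S, dG.d x y ≤ R) →
          ∃ l, ∃ W ∈ U l, S ⊆ W) ∧
        (∀ l, ∀ W ∈ U l, ∀ W' ∈ U l, W ≠ W' → ∀ x ∈ W, ∀ y ∈ W', R < dG.d x y) := by
  intro R hR
  obtain ⟨B, hB, V, hV⟩ := hasdim R hR
  obtain ⟨n, hinj⟩ := hreg _ (dG.proper 1 (2 * (B + R)))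
  let f : G → (m : ℕ) × (G ⧸ Gseq m) := fun g => ⟨n, QuotientGroup.mk g⟩
  have hle (x y : G) : dB (f x) (f y) ≤ dG.d x y :=
    (hdB.2.2.2.1 n x y).trans_le (quotDist_le_d dG _ x y)
  have hiso (x y : G) (hxy : dG.d x y ≤ B + R) : dB (f x) (f y) = dG.d x y :=
    (hdB.2.2.2.1 n x y).trans (quotDist_eq_d_of_le hinj hxy)
  exact ⟨2 * B, by positivity, _, IsAsdimCover.comap hV dG.d_self dG.d_symm
    dG.d_triangle hB.le hle hiso⟩

/-- If the box space of a regular residually compact approximation of `G`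
has asymptotic dimension at most `s`, then so does `(G, d)` itself. -/
theorem asdim_le_of_asdim_box_space_le
    {G : Type*} [Group G] [TopologicalSpace G] [IsTopologicalGroup G]
    [LocallyCompactSpace G] [T2Space G] [SecondCountableTopology G]
    (dG : PRICMetric G)
    (Gseq : ℕ → Subgroup G)
    (hclosed : ∀ n, IsClosed ((Gseq n : Set G)))
    (hcc : ∀ n, IsCocompactSubgroup (Gseq n))
    (hinter : (⋂ n, ((Gseq n) : Set G)) = {1})
    (hreg : ∀ F : Set G, IsCompact F → ∃ n, ∀ k : G,
      Set.InjOn (QuotientGroup.mk : G → G ⧸ Gseq n) ((fun x => x * k) '' F))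
    (dB : ((n : ℕ) × (G ⧸ Gseq n)) → ((n : ℕ) × (G ⧸ Gseq n)) → ℝ)
    (hdB : IsBoxMetric dG Gseq dB)
    (s : ℕ)
    (hasdim : ∀ R : ℝ, 0 < R → ∃ B : ℝ, 0 < B ∧
      ∃ V : Fin (s + 1) → Set (Set ((n : ℕ) × (G ⧸ Gseq n))),
        (∀ l, ∀ U ∈ V l, ∀ x ∈ U, ∀ y ∈ U, dB x y ≤ B) ∧
        (∀ S : Set ((n : ℕ) × (G ⧸ Gseq n)), (∀ x ∈ S, ∀ y ∈ S, dB x y ≤ R) →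
          ∃ l, ∃ U ∈ V l, S ⊆ U) ∧
        (∀ l, ∀ U ∈ V l, ∀ U' ∈ V l, U ≠ U' → ∀ x ∈ U, ∀ y ∈ U', R < dB x y)) :
    ∀ R : ℝ, 0 < R → ∃ B' : ℝ, 0 < B' ∧
      ∃ U : Fin (s + 1) → Set (Set G),
        (∀ l, ∀ W ∈ U l, ∀ x ∈ W, ∀ y ∈ W, dG.d x y ≤ B') ∧
        (∀ S : Set G, (∀ x ∈ S, ∀ y ∈ S, dG.d x y ≤ R) →
          ∃ l, ∃ W ∈ U l, S ⊆ W) ∧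
        (∀ l, ∀ W ∈ U l, ∀ W' ∈ U l, W ≠ W' → ∀ x ∈ W, ∀ y ∈ W', R < dG.d x y) :=
  asdim_le_of_asdim_box_space_le_general dG Gseq hreg dB hdB s hasdim
end

section
/- Let G be a second countable locally compact Hausdorff residually compact group with a regular residually compact approximation σ = (G_n)_{n∈ℕ}, and let H ≤ G be an open normal subgroup. Then κ = (H ∩ G_n)_{n∈ℕ} is a regular residually compact approximation of the topological group H: each H ∩ G_n is a closed cocompact subgroup of H, ⋂_{n∈ℕ}(H ∩ G_n) = {1}, and for every compact subset F ⊆ H there is n ∈ ℕ such that F⁻¹F ∩ ⋃_{k∈H} k (H ∩ G_n) k⁻¹ = {1}. -/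
/-!
Closedness and triviality of the intersection pass from `Gₙ` to `H ∩ Gₙ` directly, and so does
regularity, since the `H`-conjugates of `H ∩ Gₙ` lie among the conjugates of `Gₙ`. Openness of `H`
is what makes `H ∩ Gₙ` cocompact in `H`: the open cosets `H * {g}`, `g ∈ Gₙ`, cut a compact
fundamental set of `Gₙ` into finitely many compact pieces, which translate into `H`.
-/

open Pointwise

section OpenSubgroup

variable {G : Type*} [Group G] [TopologicalSpace G] [SeparatelyContinuousMul G]

theorem Subgroup.isClosed_coe_mul_of_isOpen {H : Subgroup G} (hH : IsOpen (H : Set G))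
    (N : Subgroup G) : IsClosed ((H : Set G) * (N : Set G)) := by
  have hcompl : ((H : Set G) * N)ᶜ = (H : Set G) * ((H : Set G) * N)ᶜ := by
    refine subset_antisymm (fun x hx => ⟨1, H.one_mem, x, hx, one_mul x⟩) ?_
    rintro _ ⟨h, hh, y, hy, rfl⟩ ⟨h', hh', g, hg, hyg⟩
    refine hy ⟨h⁻¹ * h', H.mul_mem (H.inv_mem hh) hh', g, hg, ?_⟩
    simp only at hyg ⊢
    rw [mul_assoc, hyg, inv_mul_cancel_left]
  rw [← isOpen_compl_iff, hcompl]
  exact hH.mul_right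

theorem Subgroup.exists_isCompact_mul_inf_eq_of_isOpen {H N : Subgroup G}
    (hH : IsOpen (H : Set G)) {K : Set G} (hK : IsCompact K) (hKN : K * (N : Set G) = Set.univ) :
    ∃ K' : Set G, K' ⊆ H ∧ IsCompact K' ∧ K' * ((H ⊓ N : Subgroup G) : Set G) = H := by
  set C := K ∩ ((H : Set G) * N)
  have hC : IsCompact C := hK.inter_right (H.isClosed_coe_mul_of_isOpen hH N)
  have hcover : C ⊆ ⋃ g : N, (H : Set G) * {(g : G)} := by
    rintro _ ⟨-, h, hh, g, hg, rfl⟩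
    exact Set.mem_iUnion.2 ⟨⟨g, hg⟩, Set.mul_mem_mul hh rfl⟩
  obtain ⟨t, ht⟩ := hC.elim_finite_subcover _ (fun _ => hH.mul_right) hcover
  refine ⟨⋃ g ∈ t, (· * (g : G)⁻¹) '' C ∩ H, Set.iUnion₂_subset fun _ _ => Set.inter_subset_right,
    t.finite_toSet.isCompact_biUnion fun _ _ =>
      (hC.image (continuous_mul_const _)).inter_right (H.isClosed_of_isOpen hH), ?_⟩
  refine subset_antisymm (Set.mul_subset_iff.2 fun x hx y hy => ?_) fun h hh => ?_
  · obtain ⟨-, -, -, hxH⟩ := Set.mem_iUnion₂.1 hx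
    exact H.mul_mem hxH (Subgroup.mem_inf.1 hy).1
  · obtain ⟨k, hk, g, hg, rfl⟩ := Set.mem_mul.1 (hKN ▸ Set.mem_univ h)
    have hkC : k ∈ C := ⟨hk, k * g, hh, g⁻¹, N.inv_mem hg, by simp⟩
    obtain ⟨i, hit, hki⟩ := Set.mem_iUnion₂.1 (ht hkC)
    obtain ⟨h', hh', -, rfl, rfl⟩ := hki
    refine ⟨h', Set.mem_iUnion₂.2 ⟨i, hit, ⟨_, hkC, by simp⟩, hh'⟩, i * g,
      Subgroup.mem_inf.2 ⟨?_, N.mul_mem i.2 hg⟩, by simp [mul_assoc]⟩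
    simpa [mul_assoc] using H.mul_mem (H.inv_mem hh') hh

end OpenSubgroup

theorem Subgroup.inv_mul_inter_iUnion_conj_subset_one {G : Type*} [Group G] {F : Set G}
    {N : Subgroup G}
    (hF : ∀ k : G, Set.InjOn (QuotientGroup.mk : G → G ⧸ N) ((fun x => x * k) '' F)) :
    (F⁻¹ * F) ∩ (⋃ k : G, (fun x => k * x * k⁻¹) '' (N : Set G)) ⊆ {1} := by
  rintro _ ⟨⟨a, ha, b, hb, rfl⟩, hx⟩
  obtain ⟨k, g, hg, hkg⟩ := Set.mem_iUnion.1 hx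
  have hq : (QuotientGroup.mk (a⁻¹ * k) : G ⧸ N) = QuotientGroup.mk (b * k) := by
    have hconj : (a⁻¹ * k)⁻¹ * (b * k) = g := by
      simp only at hkg
      calc (a⁻¹ * k)⁻¹ * (b * k) = k⁻¹ * (a * b) * k := by group
        _ = g := by rw [← hkg]; group
    exact QuotientGroup.eq.2 (hconj ▸ hg)
  have hab : a⁻¹ = b := mul_right_cancel (hF k ⟨a⁻¹, ha, rfl⟩ ⟨b, hb, rfl⟩ hq)
  simp [← hab]

theorem regular_approximation_inter_open_normal_subgroup_general
    {G : Type*} [Group G] [TopologicalSpace G] [IsTopologicalGroup G]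
    (Gseq : ℕ → Subgroup G)
    (hclosed : ∀ n, IsClosed ((Gseq n : Set G)))
    (hcc : ∀ n, IsCocompactSubgroup (Gseq n))
    (hinter : (⋂ n, ((Gseq n) : Set G)) = {1})
    (hreg : ∀ F : Set G, IsCompact F → ∃ n, ∀ k : G,
      Set.InjOn (QuotientGroup.mk : G → G ⧸ Gseq n) ((fun x => x * k) '' F))
    (H : Subgroup G) (hopen : IsOpen (H : Set G)) :
    (∀ n, IsClosed ((H ⊓ Gseq n : Subgroup G) : Set G)) ∧
    (∀ n, ∃ K : Set G, K ⊆ (H : Set G) ∧ IsCompact K ∧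
      K * ((H ⊓ Gseq n : Subgroup G) : Set G) = (H : Set G)) ∧
    (⋂ n, ((H ⊓ Gseq n : Subgroup G) : Set G)) = {1} ∧
    (∀ F : Set G, F ⊆ (H : Set G) → IsCompact F → ∃ n,
      (F⁻¹ * F) ∩ (⋃ k ∈ (H : Set G),
        (fun x => k * x * k⁻¹) '' ((H ⊓ Gseq n : Subgroup G) : Set G)) ⊆ {1}) := by
  refine ⟨fun n => (H.isClosed_of_isOpen hopen).inter (hclosed n), fun n => ?_, ?_,
    fun F _ hF => ?_⟩
  · obtain ⟨K, hK, hKG⟩ := hcc n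
    exact Subgroup.exists_isCompact_mul_inf_eq_of_isOpen hopen hK hKG
  · simp only [Subgroup.coe_inf, ← Set.inter_iInter, hinter]
    exact Set.inter_eq_right.2 (Set.singleton_subset_iff.2 H.one_mem)
  · obtain ⟨n, hn⟩ := hreg F hF
    refine ⟨n, subset_trans (Set.inter_subset_inter_right _ ?_)
      (Subgroup.inv_mul_inter_iUnion_conj_subset_one hn)⟩
    exact Set.iUnion₂_subset fun k _ =>
      Set.subset_iUnion_of_subset k (Set.image_mono inf_le_right)

/-- If `σ = (Gₙ)` is a regular residually compact approximation of a second
countable locally compact Hausdorff residually compact group `G` and `H ≤ G` is an open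
normal subgroup, then `κ = (H ∩ Gₙ)` is a regular residually compact approximation of `H`:
each `H ∩ Gₙ` is closed and cocompact in `H`, `⋂ₙ (H ∩ Gₙ) = {1}`, and for every compact
`F ⊆ H` there is `n` with `F⁻¹F ∩ ⋃_{k∈H} k (H ∩ Gₙ) k⁻¹` trivial. -/
theorem regular_approximation_inter_open_normal_subgroup
    {G : Type*} [Group G] [TopologicalSpace G] [IsTopologicalGroup G]
    [LocallyCompactSpace G] [T2Space G] [SecondCountableTopology G]
    (Gseq : ℕ → Subgroup G)
    (hclosed : ∀ n, IsClosed ((Gseq n : Set G)))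
    (hcc : ∀ n, IsCocompactSubgroup (Gseq n))
    (hinter : (⋂ n, ((Gseq n) : Set G)) = {1})
    (hreg : ∀ F : Set G, IsCompact F → ∃ n, ∀ k : G,
      Set.InjOn (QuotientGroup.mk : G → G ⧸ Gseq n) ((fun x => x * k) '' F))
    (H : Subgroup G) (hopen : IsOpen (H : Set G)) (hnormal : H.Normal) :
    (∀ n, IsClosed ((H ⊓ Gseq n : Subgroup G) : Set G)) ∧
    (∀ n, ∃ K : Set G, K ⊆ (H : Set G) ∧ IsCompact K ∧
      K * ((H ⊓ Gseq n : Subgroup G) : Set G) = (H : Set G)) ∧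
    (⋂ n, ((H ⊓ Gseq n : Subgroup G) : Set G)) = {1} ∧
    (∀ F : Set G, F ⊆ (H : Set G) → IsCompact F → ∃ n,
      (F⁻¹ * F) ∩ (⋃ k ∈ (H : Set G),
        (fun x => k * x * k⁻¹) '' ((H ⊓ Gseq n : Subgroup G) : Set G)) ⊆ {1}) :=
  regular_approximation_inter_open_normal_subgroup_general Gseq hclosed hcc hinter hreg H hopen
end

section
/- Let G be a second countable locally compact Hausdorff group with a left Haar measure ν, let s ∈ ℕ, and let (G_n)_{n∈ℕ} be a sequence of subgroups of G. Suppose that for every δ > 0 and every compact subset M ⊆ G there exist n ∈ ℕ and continuous compactly supported functions μ₀, …, μ_s : G → [0,1] such that: (a) supp(μ_l) ∩ supp(μ_l)·h = ∅ for every l ∈ {0,…,s} and every h ∈ G_n \ {1_G}; (b) ∑_{l=0}^{s} ∑_{h∈G_n} μ_l(gh) = 1 for every g ∈ G; (c) sup_{h∈G} |μ_l(h) − μ_l(gh)| ≤ δ for every l and every g ∈ M. Then G is amenable in the Følner sense: for every ε > 0 and every compact subset M ⊆ G there exists f ∈ L¹(G, ν) with f ≥ 0 almost everywhere, ‖f‖₁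 = 1, and ‖f(x·) − f‖₁ ≤ ε for every x ∈ M, where f(x·) denotes the function t ↦ f(xt). -/
open MeasureTheory Function
open scoped ENNReal

/-!
Put `F = ∑ₗ μₗ` and `Γ = Gₙ`. Condition (b) says `∑_{h ∈ Γ} F(gh) = 1`, so for every
right-invariant measure `τ` one can unfold `∫ ψ dτ = ∫ F(y) ∑_{h ∈ Γ} ψ(yh) dτ(y)`.
For `τ = ν.inv` and `ψ = F(g·)` the inner sum is `1`, so left translation does not change
`∫ F dν.inv`; by uniqueness of Haar measure this forces `G` to be unimodular. For `τ = ν` and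
`ψ` the indicator of `supp μₗ`, whose `Γ`-translates are disjoint by (a), the inner sum is at
most `1`, so `ν(supp μₗ) ≤ ∫ F dν`. With (c) this gives
`‖F(g·) - F‖₁ ≤ ∑ₗ 2δ ν(supp μₗ) ≤ 2(s+1)δ ‖F‖₁`, and `F / ‖F‖₁` is the Følner function.
-/

lemma ENNReal.tsum_le_of_support_subsingleton {ι : Type*} {f : ι → ℝ≥0∞} {c : ℝ≥0∞}
    (hf : (support f).Subsingleton) (hc : ∀ i, f i ≤ c) : ∑' i, f i ≤ c := by
  obtain h | ⟨i, hi⟩ := hf.eq_empty_or_singleton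
  · simp [support_eq_empty_iff.1 h]
  · rw [tsum_eq_single i fun j hj => notMem_support.1 (by simpa [hi] using hj)]
    exact hc i

lemma ENNReal.ofReal_tsum_of_support_subsingleton {ι : Type*} {f : ι → ℝ} (hnn : ∀ i, 0 ≤ f i)
    (hf : (support f).Subsingleton) :
    ENNReal.ofReal (∑' i, f i) = ∑' i, ENNReal.ofReal (f i) :=
  ENNReal.ofReal_tsum_of_nonneg hnn (summable_of_hasFiniteSupport hf.finite)

lemma exists_integral_abs_eq_one_of_integral_abs_sub_le {X : Type*} [Mul X] [MeasurableSpace X]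
    (ν : Measure X) {F : X → ℝ} (hint : Integrable F ν) (hnn : ∀ x, 0 ≤ F x)
    (hI : 0 < ∫ x, F x ∂ν) {M : Set X} {ε : ℝ}
    (hM : ∀ g ∈ M, ∫ x, |F (g * x) - F x| ∂ν ≤ ε * ∫ x, F x ∂ν) :
    ∃ f : X → ℝ, Integrable f ν ∧ (∀ᵐ x ∂ν, 0 ≤ f x) ∧ (∫ x, |f x| ∂ν) = 1 ∧
      ∀ g ∈ M, (∫ x, |f (g * x) - f x| ∂ν) ≤ ε := by
  set I := ∫ x, F x ∂ν
  refine ⟨fun x => F x / I, hint.div_const I, ae_of_all _ fun x => div_nonneg (hnn x) hI.le,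
    ?_, fun g hg => ?_⟩
  · simp_rw [abs_div, abs_of_nonneg (hnn _), abs_of_pos hI, integral_div]
    exact div_self hI.ne'
  · simp_rw [← sub_div, abs_div, abs_of_pos hI, integral_div]
    exact (div_le_iff₀ hI).2 (hM g hg)

section

variable {G : Type*} [Group G]

def RightTranslatesDisjoint (Γ : Subgroup G) (K : Set G) : Prop :=
  ∀ h ∈ Γ, h ≠ 1 → Disjoint K ((fun g => g * h) '' K)

namespace RightTranslatesDisjoint

variable {Γ : Subgroup G} {K : Set G}

lemma eq_of_mul_mem (hK : RightTranslatesDisjoint Γ K) {g : G} {h h' : Γ} (hh : g * h ∈ K)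
    (hh' : g * h' ∈ K) : h = h' := by
  by_contra hne
  refine Set.disjoint_left.1 (hK _ (mul_mem (inv_mem h.2) h'.2) ?_) hh' ⟨g * h, hh, by group⟩
  rwa [ne_eq, inv_mul_eq_one, Subtype.coe_inj]

lemma tsum_indicator_one_mul_le_one (hK : RightTranslatesDisjoint Γ K) (g : G) :
    ∑' h : Γ, K.indicator (1 : G → ℝ≥0∞) (g * h) ≤ 1 :=
  ENNReal.tsum_le_of_support_subsingleton
    (fun _ hh _ hh' => hK.eq_of_mul_mem (Set.mem_of_indicator_ne_zero hh)
      (Set.mem_of_indicator_ne_zero hh'))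
    fun _ => Set.indicator_apply_le' (fun _ => le_rfl) fun _ => zero_le_one

lemma countable [TopologicalSpace G] [ContinuousMul G] [TopologicalSpace.SeparableSpace G]
    (hK : RightTranslatesDisjoint Γ K) (hne : (interior K).Nonempty) : Countable Γ := by
  refine Pairwise.countable_of_isOpen_disjoint
    (s := fun h : Γ => (fun x => x * (h : G)⁻¹) ⁻¹' interior K)
    (fun h h' hne' => Set.disjoint_left.2 fun x hx hx' => hne' ?_)
    (fun h => isOpen_interior.preimage (continuous_mul_const _)) fun h => ?_
  · exact inv_injective (hK.eq_of_mul_mem (g := x) (h := h⁻¹) (h' := h'⁻¹)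
      (interior_subset hx) (interior_subset hx'))
  · obtain ⟨x, hx⟩ := hne
    exact ⟨x * h, by simpa using hx⟩

end RightTranslatesDisjoint

lemma tsum_ofReal_sum_mul_eq_one [TopologicalSpace G] {ι : Type*} [Fintype ι] {μ : ι → G → ℝ}
    {Γ : Subgroup G} (hnn : ∀ i x, 0 ≤ μ i x)
    (hdisj : ∀ i, RightTranslatesDisjoint Γ (tsupport (μ i)))
    (hsum : ∀ g, ∑ i, ∑' h : Γ, μ i (g * h) = 1) (g : G) :
    ∑' h : Γ, ENNReal.ofReal (∑ i, μ i (g * h)) = 1 := by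
  have hsupp : ∀ i, (support fun h : Γ => μ i (g * h)).Subsingleton := fun i _ hh _ hh' =>
    (hdisj i).eq_of_mul_mem (subset_tsupport _ hh) (subset_tsupport _ hh')
  simp_rw [ENNReal.ofReal_sum_of_nonneg fun i _ => hnn i _]
  rw [Summable.tsum_finsetSum fun i _ => ENNReal.summable]
  simp_rw [← ENNReal.ofReal_tsum_of_support_subsingleton (fun _ => hnn _ _) (hsupp _)]
  rw [← ENNReal.ofReal_sum_of_nonneg fun i _ => tsum_nonneg fun _ => hnn _ _, hsum,
    ENNReal.ofReal_one]

lemma countable_of_sum_tsum_mul_eq_one [TopologicalSpace G] [ContinuousMul G]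
    [TopologicalSpace.SeparableSpace G] {ι : Type*} [Fintype ι] {μ : ι → G → ℝ} {Γ : Subgroup G}
    (hcont : ∀ i, Continuous (μ i)) (hdisj : ∀ i, RightTranslatesDisjoint Γ (tsupport (μ i)))
    (hsum : ∀ g, ∑ i, ∑' h : Γ, μ i (g * h) = 1) : Countable Γ := by
  obtain ⟨i, h, hh⟩ : ∃ i, ∃ h : Γ, μ i h ≠ 0 := by
    by_contra! H
    simpa [H] using hsum 1
  exact (hdisj i).countable
    ⟨h, (hcont i).isOpen_support.subset_interior_iff.2 (subset_tsupport _) hh⟩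

lemma integral_pos_of_tsum_ofReal_mul_eq_one [TopologicalSpace G] [MeasurableSpace G]
    [OpensMeasurableSpace G] (ν : Measure G) [ν.IsOpenPosMeasure]
    [IsFiniteMeasureOnCompacts ν] {Γ : Subgroup G} {F : G → ℝ} (hFc : Continuous F)
    (hFs : HasCompactSupport F) (hnn : 0 ≤ F)
    (hF : ∀ g, ∑' h : Γ, ENNReal.ofReal (F (g * h)) = 1) : 0 < ∫ x, F x ∂ν := by
  obtain ⟨h, hh⟩ : ∃ h : Γ, F h ≠ 0 := by
    by_contra! H
    simpa [H] using hF 1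
  exact hFc.integral_pos_of_hasCompactSupport_nonneg_nonzero hFs hnn hh

section CosetPartition

variable [MeasurableSpace G] [MeasurableMul G] {Γ : Subgroup G} [Countable Γ] {F : G → ℝ≥0∞}
  (τ : Measure G) [τ.IsMulRightInvariant]

lemma lintegral_eq_lintegral_mul_tsum_mul (hFm : Measurable F)
    (hF : ∀ g, ∑' h : Γ, F (g * h) = 1) {ψ : G → ℝ≥0∞} (hψ : Measurable ψ) :
    ∫⁻ x, ψ x ∂τ = ∫⁻ y, F y * ∑' h : Γ, ψ (y * h) ∂τ := calc
  ∫⁻ x, ψ x ∂τ = ∫⁻ x, ∑' h : Γ, ψ x * F (x * h) ∂τ := by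
    simp_rw [ENNReal.tsum_mul_left, hF, mul_one]
  _ = ∑' h : Γ, ∫⁻ x, ψ x * F (x * h) ∂τ :=
    lintegral_tsum fun h => (hψ.mul (hFm.comp (measurable_mul_const _))).aemeasurable
  _ = ∑' h : Γ, ∫⁻ y, F y * ψ (y * (h : G)⁻¹) ∂τ := tsum_congr fun h => by
    rw [← lintegral_mul_right_eq_self (fun y => F y * ψ (y * (h : G)⁻¹)) h]
    simp_rw [mul_inv_cancel_right, mul_comm]
  _ = ∑' h : Γ, ∫⁻ y, F y * ψ (y * h) ∂τ :=
    (Equiv.inv Γ).tsum_eq fun h : Γ => ∫⁻ y, F y * ψ (y * h) ∂τ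
  _ = ∫⁻ y, F y * ∑' h : Γ, ψ (y * h) ∂τ := by
    rw [← lintegral_tsum (f := fun (h : Γ) y => F y * ψ (y * h)) fun h =>
      (hFm.mul (hψ.comp (measurable_mul_const _))).aemeasurable]
    simp_rw [ENNReal.tsum_mul_left]

lemma lintegral_comp_mul_left_of_tsum_mul_eq_one (hFm : Measurable F)
    (hF : ∀ g, ∑' h : Γ, F (g * h) = 1) (g : G) :
    ∫⁻ x, F (g * x) ∂τ = ∫⁻ x, F x ∂τ := by
  rw [lintegral_eq_lintegral_mul_tsum_mul τ hFm hF (ψ := fun x => F (g * x))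
    (hFm.comp (measurable_const_mul g))]
  simp_rw [← mul_assoc, hF, mul_one]

lemma measure_le_lintegral_of_tsum_mul_eq_one (hFm : Measurable F)
    (hF : ∀ g, ∑' h : Γ, F (g * h) = 1) {K : Set G} (hKm : MeasurableSet K)
    (hK : RightTranslatesDisjoint Γ K) : τ K ≤ ∫⁻ x, F x ∂τ := by
  rw [← lintegral_indicator_one hKm,
    lintegral_eq_lintegral_mul_tsum_mul τ hFm hF (measurable_one.indicator hKm)]
  exact lintegral_mono fun y => mul_le_of_le_one_right' (hK.tsum_indicator_one_mul_le_one y)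

end CosetPartition

section Haar

variable [TopologicalSpace G] [IsTopologicalGroup G] [MeasurableSpace G] [BorelSpace G]

lemma isMulRightInvariant_of_lintegral_comp_mul_right [LocallyCompactSpace G]
    [SecondCountableTopology G] (ν : Measure G) [ν.IsHaarMeasure] {φ : G → ℝ≥0∞}
    (hφ : Measurable φ) (h0 : ∫⁻ x, φ x ∂ν ≠ 0) (htop : ∫⁻ x, φ x ∂ν ≠ ⊤)
    (h : ∀ g, ∫⁻ x, φ (x * g) ∂ν = ∫⁻ x, φ x ∂ν) : ν.IsMulRightInvariant := by
  refine ⟨fun g => ?_⟩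
  have hsmul := Measure.isMulLeftInvariant_eq_smul (Measure.map (· * g) ν) ν
  suffices Measure.haarScalarFactor (Measure.map (· * g) ν) ν = 1 by
    rwa [this, one_smul] at hsmul
  have hint := congrArg (fun m => ∫⁻ x, φ x ∂m) hsmul
  simp only [lintegral_map hφ (measurable_mul_const g), h, lintegral_smul_measure,
    ENNReal.smul_def, smul_eq_mul] at hint
  exact ENNReal.coe_eq_one.1 ((ENNReal.mul_eq_right h0 htop).1 hint.symm)

lemma isMulRightInvariant_of_tsum_ofReal_mul_eq_one [LocallyCompactSpace G]
    [SecondCountableTopology G] (ν : Measure G) [ν.IsHaarMeasure] {Γ : Subgroup G} [Countable Γ]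
    {F : G → ℝ} (hFc : Continuous F) (hFs : HasCompactSupport F) (hnn : 0 ≤ F)
    (hF : ∀ g, ∑' h : Γ, ENNReal.ofReal (F (g * h)) = 1) : ν.IsMulRightInvariant := by
  have hFm : Measurable fun x => ENNReal.ofReal (F x) := hFc.measurable.ennreal_ofReal
  have hinv : ∫⁻ x, ENNReal.ofReal (F x⁻¹) ∂ν = ∫⁻ x, ENNReal.ofReal (F x) ∂ν.inv :=
    (lintegral_map hFm measurable_inv).symm
  have hI : ∫⁻ x, ENNReal.ofReal (F x⁻¹) ∂ν = ENNReal.ofReal (∫ x, F x ∂ν.inv) := by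
    rw [hinv, ofReal_integral_eq_lintegral_ofReal (hFc.integrable_of_hasCompactSupport hFs)
      (ae_of_all _ hnn)]
  have hpos := integral_pos_of_tsum_ofReal_mul_eq_one ν.inv hFc hFs hnn hF
  refine isMulRightInvariant_of_lintegral_comp_mul_right ν (φ := fun x => ENNReal.ofReal (F x⁻¹))
    (hFm.comp measurable_inv) (hI ▸ (ENNReal.ofReal_pos.2 hpos).ne') (hI ▸ ENNReal.ofReal_ne_top)
    fun g => ?_
  calc ∫⁻ x, ENNReal.ofReal (F (x * g)⁻¹) ∂ν = ∫⁻ x, ENNReal.ofReal (F (g⁻¹ * x)) ∂ν.inv := by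
        simp_rw [mul_inv_rev]
        exact (lintegral_map (hFm.comp (measurable_const_mul _)) measurable_inv).symm
    _ = ∫⁻ x, ENNReal.ofReal (F x⁻¹) ∂ν := by
        rw [lintegral_comp_mul_left_of_tsum_mul_eq_one ν.inv hFm hF, hinv]

lemma measureReal_le_integral_of_tsum_ofReal_mul_eq_one (ν : Measure G)
    [IsFiniteMeasureOnCompacts ν] [ν.IsMulRightInvariant] {Γ : Subgroup G} [Countable Γ]
    {F : G → ℝ} (hFc : Continuous F) (hFs : HasCompactSupport F) (hnn : 0 ≤ F)
    (hF : ∀ g, ∑' h : Γ, ENNReal.ofReal (F (g * h)) = 1) {K : Set G} (hKm : MeasurableSet K)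
    (hK : RightTranslatesDisjoint Γ K) : ν.real K ≤ ∫ x, F x ∂ν := by
  refine ENNReal.toReal_le_of_le_ofReal (integral_nonneg hnn) ?_
  rw [ofReal_integral_eq_lintegral_ofReal (hFc.integrable_of_hasCompactSupport hFs)
    (ae_of_all _ hnn)]
  exact measure_le_lintegral_of_tsum_mul_eq_one ν hFc.measurable.ennreal_ofReal hF hKm hK

lemma integral_abs_comp_mul_left_sub_le (ν : Measure G) [IsFiniteMeasureOnCompacts ν]
    [ν.IsMulLeftInvariant] {φ : G → ℝ} (hφ : HasCompactSupport φ) {δ : ℝ} (hδ : 0 ≤ δ) {g : G}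
    (hg : ∀ x, |φ x - φ (g * x)| ≤ δ) :
    ∫ x, |φ (g * x) - φ x| ∂ν ≤ 2 * δ * ν.real (tsupport φ) := by
  set K := tsupport φ
  have hKm : MeasurableSet K := (isClosed_tsupport φ).measurableSet
  have hind : Integrable (K.indicator fun _ => δ) ν :=
    (integrable_indicator_iff hKm).2 (integrableOn_const hφ.isCompact.measure_lt_top.ne)
  have hpt : ∀ x,
      |φ (g * x) - φ x| ≤ K.indicator (fun _ => δ) x + K.indicator (fun _ => δ) (g * x) := by
    intro x
    have h0 : ∀ y, 0 ≤ K.indicator (fun _ => δ) y := Set.indicator_nonneg fun _ _ => hδ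
    by_cases hx : x ∈ K
    · rw [Set.indicator_of_mem hx, abs_sub_comm]
      linarith [hg x, h0 (g * x)]
    by_cases hgx : g * x ∈ K
    · rw [Set.indicator_of_mem hgx, abs_sub_comm]
      linarith [hg x, h0 x]
    rw [image_eq_zero_of_notMem_tsupport hx, image_eq_zero_of_notMem_tsupport hgx]
    simpa using add_nonneg (h0 x) (h0 (g * x))
  calc ∫ x, |φ (g * x) - φ x| ∂ν
      ≤ ∫ x, K.indicator (fun _ => δ) x + K.indicator (fun _ => δ) (g * x) ∂ν :=
        integral_mono_of_nonneg (ae_of_all _ fun _ => abs_nonneg _)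
          (hind.add (hind.comp_mul_left g)) (ae_of_all _ hpt)
    _ = 2 * δ * ν.real K := by
        rw [integral_add hind (hind.comp_mul_left g),
          integral_mul_left_eq_self (K.indicator fun _ => δ) g, integral_indicator_const _ hKm,
          smul_eq_mul]
        ring

variable {ι : Type*} [Fintype ι] {μ : ι → G → ℝ}

lemma integral_abs_sum_comp_mul_left_sub_le (ν : Measure G) [IsFiniteMeasureOnCompacts ν]
    [ν.IsMulLeftInvariant] (hcont : ∀ i, Continuous (μ i)) (hsupp : ∀ i, HasCompactSupport (μ i))
    {δ : ℝ} (hδ : 0 ≤ δ) {g : G} (hg : ∀ i x, |μ i x - μ i (g * x)| ≤ δ) :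
    ∫ x, |∑ i, μ i (g * x) - ∑ i, μ i x| ∂ν ≤ ∑ i, 2 * δ * ν.real (tsupport (μ i)) := by
  have hint : ∀ i, Integrable (fun x => |μ i (g * x) - μ i x|) ν := fun i =>
    have hi := (hcont i).integrable_of_hasCompactSupport (hsupp i) (μ := ν)
    ((hi.comp_mul_left g).sub hi).abs
  calc ∫ x, |∑ i, μ i (g * x) - ∑ i, μ i x| ∂ν
      ≤ ∫ x, ∑ i, |μ i (g * x) - μ i x| ∂ν :=
        integral_mono_of_nonneg (ae_of_all _ fun _ => abs_nonneg _)
          (integrable_finsetSum _ fun i _ => hint i) (ae_of_all _ fun x => by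
            simpa only [Finset.sum_sub_distrib] using
              Finset.abs_sum_le_sum_abs (fun i => μ i (g * x) - μ i x) Finset.univ)
    _ = ∑ i, ∫ x, |μ i (g * x) - μ i x| ∂ν := integral_finsetSum _ fun i _ => hint i
    _ ≤ ∑ i, 2 * δ * ν.real (tsupport (μ i)) := Finset.sum_le_sum fun i _ =>
        integral_abs_comp_mul_left_sub_le ν (hsupp i) hδ (hg i)

end Haar

end

theorem amenable_of_partitions_of_unity_general
    {G : Type*} [Group G] [TopologicalSpace G] [IsTopologicalGroup G]
    [LocallyCompactSpace G] [SecondCountableTopology G]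
    [MeasurableSpace G] [BorelSpace G]
    (ν : Measure G) [ν.IsHaarMeasure]
    (s : ℕ) (Gseq : ℕ → Subgroup G)
    (hpart : ∀ δ : ℝ, 0 < δ → ∀ M : Set G, IsCompact M →
      ∃ n : ℕ, ∃ μ : Fin (s + 1) → G → ℝ,
        (∀ l, Continuous (μ l)) ∧
        (∀ l, HasCompactSupport (μ l)) ∧
        (∀ l g, μ l g ∈ Set.Icc (0 : ℝ) 1) ∧
        (∀ l, ∀ h ∈ Gseq n, h ≠ 1 →
          Disjoint (tsupport (μ l)) ((fun g => g * h) '' tsupport (μ l))) ∧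
        (∀ g : G, ∑ l : Fin (s + 1), ∑' h : (Gseq n), μ l (g * (h : G)) = 1) ∧
        (∀ l, ∀ g ∈ M, ∀ h : G, |μ l h - μ l (g * h)| ≤ δ)) :
    ∀ ε : ℝ, 0 < ε → ∀ M : Set G, IsCompact M →
      ∃ f : G → ℝ, Integrable f ν ∧ (∀ᵐ x ∂ν, 0 ≤ f x) ∧
        (∫ x, |f x| ∂ν) = 1 ∧
        ∀ g ∈ M, (∫ x, |f (g * x) - f x| ∂ν) ≤ ε := by
  intro ε hε M hM
  set δ := ε / (2 * (s + 1))
  obtain ⟨n, μ, hcont, hsupp, hicc, hdisj, hsum, hinv⟩ := hpart δ (by positivity) M hM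
  set F : G → ℝ := fun x => ∑ l, μ l x
  have hnn : ∀ l x, 0 ≤ μ l x := fun l x => (hicc l x).1
  have hFnn : 0 ≤ F := fun x => Finset.sum_nonneg fun l _ => hnn l x
  have hFc : Continuous F := continuous_finsetSum _ fun l _ => hcont l
  have hFs : HasCompactSupport F := by
    simpa only [Finset.sum_fn] using HasCompactSupport.finset_sum (s := .univ) fun l _ => hsupp l
  have hF : ∀ g, ∑' h : Gseq n, ENNReal.ofReal (F (g * h)) = 1 :=
    tsum_ofReal_sum_mul_eq_one hnn hdisj hsum
  have : Countable (Gseq n) := countable_of_sum_tsum_mul_eq_one hcont hdisj hsum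
  have := isMulRightInvariant_of_tsum_ofReal_mul_eq_one ν hFc hFs hFnn hF
  have hI := integral_pos_of_tsum_ofReal_mul_eq_one ν hFc hFs hFnn hF
  have hK : ∀ l, ν.real (tsupport (μ l)) ≤ ∫ x, F x ∂ν := fun l =>
    measureReal_le_integral_of_tsum_ofReal_mul_eq_one ν hFc hFs hFnn hF
      (isClosed_tsupport _).measurableSet (hdisj l)
  refine exists_integral_abs_eq_one_of_integral_abs_sub_le ν
    (hFc.integrable_of_hasCompactSupport hFs) hFnn hI fun g hg => ?_
  calc ∫ x, |F (g * x) - F x| ∂ν ≤ ∑ l, 2 * δ * ν.real (tsupport (μ l)) :=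
        integral_abs_sum_comp_mul_left_sub_le ν hcont hsupp (by positivity)
          fun l x => hinv l g hg x
    _ ≤ ∑ _l : Fin (s + 1), 2 * δ * ∫ x, F x ∂ν := by gcongr with l; exact hK l
    _ = ε * ∫ x, F x ∂ν := by
        simp only [Finset.sum_const, Finset.card_univ, Fintype.card_fin, nsmul_eq_mul, δ]
        field_simp
        push_cast
        ring

/-- If a second countable locally compact Hausdorff group `G` with left
Haar measure `ν` admits, for every `δ > 0` and compact `M ⊆ G`, continuous compactly
supported `[0,1]`-valued functions `μ₀, …, μ_s` whose `Gₙ`-translates form a partition of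
unity with disjoint supports along some subgroup `Gₙ` and which are `δ`-invariant under left
translation by `M`, then `G` is amenable in the Følner sense. -/
theorem amenable_of_partitions_of_unity
    {G : Type*} [Group G] [TopologicalSpace G] [IsTopologicalGroup G]
    [LocallyCompactSpace G] [T2Space G] [SecondCountableTopology G]
    [MeasurableSpace G] [BorelSpace G]
    (ν : Measure G) [ν.IsHaarMeasure]
    (s : ℕ) (Gseq : ℕ → Subgroup G)
    (hpart : ∀ δ : ℝ, 0 < δ → ∀ M : Set G, IsCompact M →
      ∃ n : ℕ, ∃ μ : Fin (s + 1) → G → ℝ,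
        (∀ l, Continuous (μ l)) ∧
        (∀ l, HasCompactSupport (μ l)) ∧
        (∀ l g, μ l g ∈ Set.Icc (0 : ℝ) 1) ∧
        (∀ l, ∀ h ∈ Gseq n, h ≠ 1 →
          Disjoint (tsupport (μ l)) ((fun g => g * h) '' tsupport (μ l))) ∧
        (∀ g : G, ∑ l : Fin (s + 1), ∑' h : (Gseq n), μ l (g * (h : G)) = 1) ∧
        (∀ l, ∀ g ∈ M, ∀ h : G, |μ l h - μ l (g * h)| ≤ δ)) :
    ∀ ε : ℝ, 0 < ε → ∀ M : Set G, IsCompact M →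
      ∃ f : G → ℝ, Integrable f ν ∧ (∀ᵐ x ∂ν, 0 ≤ f x) ∧
        (∫ x, |f x| ∂ν) = 1 ∧
        ∀ g ∈ M, (∫ x, |f (g * x) - f x| ∂ν) ≤ ε :=
  amenable_of_partitions_of_unity_general ν s Gseq hpart
end

section
/- Let A be a (not necessarily unital) C*-algebra, let B be a C*-subalgebra of A, and let (f_n)_{n∈ℕ} be a sequence in B with 0 ≤ f_n, ‖f_n‖ ≤ 1, f_n f_{n+1} = f_n for all n, and ‖f_n a − a‖ → 0 as n → ∞ for every a ∈ A. Suppose that for every positive element b ∈ A and every δ > 0 there exists y ∈ A with ‖y y* − b‖ < δ and ‖y²‖ < δ. Let d ∈ ℕ. Then for every positive element b ∈ B and every ε with 0 < ε < 1 there exist positive contractions e, e₀, …, e_d, c₀, …, c_d ∈ B and elements y₀, …, y_d ∈ A such that for all i, j ∈ {0, …, d}: ‖e b − b‖ < ε, e_i e = e, ‖y_i y_i* − e_i‖ < ε, ‖y_i* y_i c_i − y_i* y_i‖ < ε, ‖y_i²‖ < ε, e c_i = 0, (e_i + c_i) e_i = e_i, and c_i c_j = 0 whenever i ≠ j. -/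
/-!
Replace the approximate unit by its squares `gₙ = fₙ²`. These still satisfy `gₙ gₙ₊₁ = gₙ`, and
they increase: `gₙ = fₙ₊₁ gₙ fₙ₊₁ ≤ ‖gₙ‖ fₙ₊₁² ≤ gₙ₊₁`. Choose indices `n < k₀ < m₀ < k₁ < m₁ < ⋯`
with `gₙ b ≈ b`, `yᵢ` a Hjelmborg–Rørdam witness for `g_{kᵢ}`, and `mᵢ` so large that
`yᵢ* yᵢ g_{mᵢ} ≈ yᵢ* yᵢ`; then take `e = gₙ`, `eᵢ = g_{kᵢ}` and `cᵢ = g_{mᵢ} - g_{kᵢ}`, which is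
positive by monotonicity. The exact relations all follow from `g_a g_c = g_c g_a = g_a` for `a < c`,
and `yᵢ* yᵢ cᵢ ≈ yᵢ* yᵢ` because `y* y g_k ≈ y* y y y* = y* (y y) y*` is small.
-/

open Filter Topology

section Chain

variable {R : Type*} [NonUnitalRing R] {f : ℕ → R}

theorem mul_eq_left_of_lt (hf : ∀ n, f n * f (n + 1) = f n) {a c : ℕ} (h : a < c) :
    f a * f c = f a := by
  induction c, h using Nat.le_induction with
  | base => exact hf a
  | succ c _ ih => rw [← ih, mul_assoc, hf]

theorem mul_eq_right_of_lt [StarRing R] (hf : ∀ n, f n * f (n + 1) = f n)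
    (hsa : ∀ n, IsSelfAdjoint (f n)) {a c : ℕ} (h : a < c) : f c * f a = f a := by
  simpa only [star_mul, (hsa _).star_eq] using congrArg star (mul_eq_left_of_lt hf h)

theorem mul_self_mul_succ_eq (hf : ∀ n, f n * f (n + 1) = f n) (n : ℕ) :
    f n * f n * (f (n + 1) * f (n + 1)) = f n * f n := by
  rw [← mul_assoc, mul_assoc (f n), hf, mul_assoc, hf]

theorem sub_mul_sub_eq_zero_of_lt [StarRing R] (hf : ∀ n, f n * f (n + 1) = f n)
    (hsa : ∀ n, IsSelfAdjoint (f n)) {a b c d : ℕ} (hab : a < b) (hbc : b < c) (hcd : c < d) :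
    (f b - f a) * (f d - f c) = 0 ∧ (f d - f c) * (f b - f a) = 0 := by
  have hac := hab.trans hbc
  have hbd := hbc.trans hcd
  have had := hac.trans hcd
  constructor
  · simp only [sub_mul, mul_sub, mul_eq_left_of_lt hf hbd, mul_eq_left_of_lt hf hbc,
      mul_eq_left_of_lt hf had, mul_eq_left_of_lt hf hac, sub_self]
  · simp only [sub_mul, mul_sub, mul_eq_right_of_lt hf hsa hbd, mul_eq_right_of_lt hf hsa had,
      mul_eq_right_of_lt hf hsa hbc, mul_eq_right_of_lt hf hsa hac, sub_self]

end Chain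

theorem Nat.exists_interleaving (n : ℕ) {M : ℕ → ℕ} (hM : ∀ k, k < M k) :
    ∃ K : ℕ → ℕ, (∀ i, n < K i) ∧ ∀ {i j}, i < j → M (K i) < K j := by
  let K : ℕ → ℕ := fun i => Nat.rec (n + 1) (fun _ k => M k + 1) i
  have hK : StrictMono K := strictMono_nat_of_lt_succ fun i => (hM (K i)).trans (lt_add_one _)
  refine ⟨K, fun i => (lt_add_one n).trans_le (hK.monotone i.zero_le), fun {i j} h => ?_⟩
  exact (lt_add_one _).trans_le (hK.monotone h)

theorem norm_mul_le_one {R : Type*} [NonUnitalSeminormedRing R] {a b : R} (ha : ‖a‖ ≤ 1)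
    (hb : ‖b‖ ≤ 1) : ‖a * b‖ ≤ 1 :=
  (norm_mul_le a b).trans (mul_le_one₀ ha (norm_nonneg b) hb)

section CStar

variable {A : Type*} [NonUnitalCStarAlgebra A]

theorem norm_mul_sub_self_eq_of_isSelfAdjoint {u : A} (hu : IsSelfAdjoint u) (a : A) :
    ‖a * u - a‖ = ‖u * star a - star a‖ := by
  rw [← norm_star, star_sub, star_mul, hu.star_eq]

theorem tendsto_norm_mul_sub_self_of_isSelfAdjoint {f : ℕ → A} (hsa : ∀ n, IsSelfAdjoint (f n))
    (hf : ∀ a, Tendsto (fun n => ‖f n * a - a‖) atTop (𝓝 0)) (a : A) :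
    Tendsto (fun n => ‖a * f n - a‖) atTop (𝓝 0) := by
  simpa only [norm_mul_sub_self_eq_of_isSelfAdjoint (hsa _)] using hf (star a)

theorem norm_mul_mul_sub_self_le {u : A} (hu : ‖u‖ ≤ 1) (a : A) :
    ‖u * u * a - a‖ ≤ 2 * ‖u * a - a‖ :=
  calc ‖u * u * a - a‖ = ‖u * (u * a - a) + (u * a - a)‖ := by noncomm_ring
    _ ≤ ‖u‖ * ‖u * a - a‖ + ‖u * a - a‖ :=
        (norm_add_le _ _).trans (by gcongr; exact norm_mul_le _ _)
    _ ≤ 2 * ‖u * a - a‖ := by nlinarith [norm_nonneg (u * a - a)]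

theorem tendsto_norm_mul_self_mul_sub_self {f : ℕ → A} (hf1 : ∀ n, ‖f n‖ ≤ 1)
    (hf : ∀ a, Tendsto (fun n => ‖f n * a - a‖) atTop (𝓝 0)) (a : A) :
    Tendsto (fun n => ‖f n * f n * a - a‖) atTop (𝓝 0) :=
  squeeze_zero (fun _ => norm_nonneg _) (fun n => norm_mul_mul_sub_self_le (hf1 n) a)
    (by simpa using (hf a).const_mul 2)

theorem norm_star_mul_self_mul_lt {y p : A} {δ : ℝ} (hp : ‖p‖ ≤ 1) (hδ : δ ≤ 1)
    (hyp : ‖y * star y - p‖ < δ) (hyy : ‖y * y‖ < δ) : ‖star y * y * p‖ < 4 * δ := by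
  have hy : ‖y‖ * ‖y‖ ≤ 2 := by
    rw [← CStarRing.norm_self_mul_star]
    linarith [norm_le_norm_add_norm_sub' (y * star y) p]
  calc ‖star y * y * p‖ = ‖star y * y * (p - y * star y) + star y * (y * y) * star y‖ := by
        noncomm_ring
    _ ≤ ‖y‖ * ‖y‖ * ‖y * star y - p‖ + ‖y‖ * ‖y * y‖ * ‖y‖ := by
        refine (norm_add_le _ _).trans (add_le_add ?_ ?_)
        · rw [← CStarRing.norm_star_mul_self, norm_sub_rev]; exact norm_mul_le _ _
        · simpa only [norm_star] using norm_mul₃_le (a := star y) (b := y * y) (c := star y)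
    _ = ‖y‖ * ‖y‖ * (‖y * star y - p‖ + ‖y * y‖) := by ring
    _ ≤ 2 * (‖y * star y - p‖ + ‖y * y‖) := by gcongr
    _ < 4 * δ := by linarith

theorem norm_star_mul_self_mul_sub_sub_lt {y p u : A} {δ : ℝ} (hp : ‖p‖ ≤ 1) (hδ : δ ≤ 1)
    (hyp : ‖y * star y - p‖ < δ) (hyy : ‖y * y‖ < δ)
    (hu : ‖star y * y * u - star y * y‖ < δ) :
    ‖star y * y * (u - p) - star y * y‖ < 5 * δ :=
  calc ‖star y * y * (u - p) - star y * y‖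
      = ‖(star y * y * u - star y * y) - star y * y * p‖ := by noncomm_ring
    _ ≤ ‖star y * y * u - star y * y‖ + ‖star y * y * p‖ := norm_sub_le _ _
    _ < 5 * δ := by linarith [norm_star_mul_self_mul_lt hp hδ hyp hyy]

end CStar

section Order

variable {A : Type*} [NonUnitalCStarAlgebra A] [PartialOrder A] [StarOrderedRing A]

theorem le_star_mul_self_of_mul_eq {p q : A} (hp : 0 ≤ p) (hp1 : ‖p‖ ≤ 1) (hpq : p * q = p) :
    p ≤ star q * q :=
  have hqp : star q * p = p := by
    simpa only [star_mul, hp.isSelfAdjoint.star_eq] using congrArg star hpq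
  calc p = star q * p * q := by rw [hqp, hpq]
    _ ≤ ‖p‖ • (star q * q) := CStarAlgebra.star_left_conjugate_le_norm_smul hp.isSelfAdjoint
    _ ≤ star q * q := smul_le_of_le_one_left (star_mul_self_nonneg q) hp1

theorem monotone_mul_self {f : ℕ → A} (hf : ∀ n, f n * f (n + 1) = f n)
    (hsa : ∀ n, IsSelfAdjoint (f n)) (hf1 : ∀ n, ‖f n‖ ≤ 1) : Monotone fun n => f n * f n := by
  refine monotone_nat_of_le_succ fun n => ?_
  have h := le_star_mul_self_of_mul_eq (hsa n).mul_self_nonneg (norm_mul_le_one (hf1 n) (hf1 n))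
    (by rw [mul_assoc, hf] : f n * f n * f (n + 1) = f n * f n)
  rwa [(hsa _).star_eq] at h

theorem exists_witnesses_of_monotone_chain (B : NonUnitalStarSubalgebra ℂ A) {g : ℕ → A}
    (hgB : ∀ n, g n ∈ B) (hg0 : ∀ n, 0 ≤ g n) (hg1 : ∀ n, ‖g n‖ ≤ 1)
    (hg : ∀ n, g n * g (n + 1) = g n) (hgmono : Monotone g)
    (hgapprox : ∀ a, Tendsto (fun n => ‖g n * a - a‖) atTop (𝓝 0))
    (hstable : ∀ b : A, 0 ≤ b → ∀ δ : ℝ, 0 < δ → ∃ y : A, ‖y * star y - b‖ < δ ∧ ‖y * y‖ < δ)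
    (d : ℕ) (b : A) {ε : ℝ} (hε : 0 < ε) (hε1 : ε < 1) :
    ∃ e : A, ∃ es cs y : Fin (d + 1) → A,
      (e ∈ B ∧ (∃ x : A, e = star x * x) ∧ ‖e‖ ≤ 1) ∧
      (∀ i, es i ∈ B ∧ (∃ x : A, es i = star x * x) ∧ ‖es i‖ ≤ 1) ∧
      (∀ i, cs i ∈ B ∧ (∃ x : A, cs i = star x * x) ∧ ‖cs i‖ ≤ 1) ∧
      ‖e * b - b‖ < ε ∧
      (∀ i, es i * e = e) ∧
      (∀ i, ‖y i * star (y i) - es i‖ < ε) ∧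
      (∀ i, ‖star (y i) * y i * cs i - star (y i) * y i‖ < ε) ∧
      (∀ i, ‖y i * y i‖ < ε) ∧
      (∀ i, e * cs i = 0) ∧
      (∀ i, (es i + cs i) * es i = es i) ∧
      (∀ i j, i ≠ j → cs i * cs j = 0) := by
  obtain ⟨δ, hδ, hδε⟩ : ∃ δ, 0 < δ ∧ 5 * δ = ε := ⟨ε / 5, by positivity, by ring⟩
  have hsa n : IsSelfAdjoint (g n) := (hg0 n).isSelfAdjoint
  obtain ⟨n, hn⟩ := ((hgapprox b).eventually_lt_const hε).exists
  choose y hyg hyy using fun k => hstable (g k) (hg0 k) δ hδ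
  have hright := tendsto_norm_mul_sub_self_of_isSelfAdjoint hsa hgapprox
  choose M hM hkM using fun k =>
    (((hright (star (y k) * y k)).eventually_lt_const hδ).and (eventually_gt_atTop k)).exists
  obtain ⟨K, hnK, hKM⟩ := Nat.exists_interleaving n hkM
  have hcs i : 0 ≤ g (M (K i)) - g (K i) := sub_nonneg.mpr (hgmono (hkM _).le)
  refine ⟨g n, fun i => g (K i), fun i => g (M (K i)) - g (K i), fun i => y (K i),
    ⟨hgB n, CStarAlgebra.nonneg_iff_eq_star_mul_self.mp (hg0 n), hg1 n⟩,
    fun i => ⟨hgB _, CStarAlgebra.nonneg_iff_eq_star_mul_self.mp (hg0 _), hg1 _⟩,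
    fun i => ⟨sub_mem (hgB _) (hgB _), CStarAlgebra.nonneg_iff_eq_star_mul_self.mp (hcs i),
      (CStarAlgebra.norm_le_norm_of_nonneg_of_le (hcs i) (sub_le_self _ (hg0 _))).trans (hg1 _)⟩,
    hn, fun i => mul_eq_right_of_lt hg hsa (hnK i), fun i => (hyg _).trans (by linarith),
    fun i => ?_, fun i => (hyy _).trans (by linarith), fun i => ?_, fun i => ?_, fun i j hij => ?_⟩
  · exact hδε ▸ norm_star_mul_self_mul_sub_sub_lt (hg1 _) (by linarith) (hyg _) (hyy _) (hM _)
  · rw [mul_sub, mul_eq_left_of_lt hg ((hnK i).trans (hkM _)), mul_eq_left_of_lt hg (hnK i),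
      sub_self]
  · rw [add_sub_cancel, mul_eq_right_of_lt hg hsa (hkM _)]
  · rcases hij.lt_or_gt with h | h
    · exact (sub_mul_sub_eq_zero_of_lt hg hsa (hkM _) (hKM h) (hkM _)).1
    · exact (sub_mul_sub_eq_zero_of_lt hg hsa (hkM _) (hKM h) (hkM _)).2

end Order

theorem stable_witnesses_in_subalgebra_general
    {A : Type*} [NonUnitalCStarAlgebra A]
    (B : NonUnitalStarSubalgebra ℂ A)
    (f : ℕ → A) (hfB : ∀ n, f n ∈ B)
    (hfpos : ∀ n, ∃ x : A, f n = star x * x) (hfnorm : ∀ n, ‖f n‖ ≤ 1)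
    (hfchain : ∀ n, f n * f (n + 1) = f n)
    (hfapprox : ∀ a : A, Tendsto (fun n => ‖f n * a - a‖) atTop (nhds 0))
    (hstable : ∀ b : A, (∃ x : A, b = star x * x) →
      ∀ δ : ℝ, 0 < δ → ∃ y : A, ‖y * star y - b‖ < δ ∧ ‖y * y‖ < δ)
    (d : ℕ) :
    ∀ b ∈ B, (∃ x : A, b = star x * x) → ∀ ε : ℝ, 0 < ε → ε < 1 →
      ∃ e : A, ∃ es cs y : Fin (d + 1) → A,
        (e ∈ B ∧ (∃ x : A, e = star x * x) ∧ ‖e‖ ≤ 1) ∧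
        (∀ i, es i ∈ B ∧ (∃ x : A, es i = star x * x) ∧ ‖es i‖ ≤ 1) ∧
        (∀ i, cs i ∈ B ∧ (∃ x : A, cs i = star x * x) ∧ ‖cs i‖ ≤ 1) ∧
        ‖e * b - b‖ < ε ∧
        (∀ i, es i * e = e) ∧
        (∀ i, ‖y i * star (y i) - es i‖ < ε) ∧
        (∀ i, ‖star (y i) * y i * cs i - star (y i) * y i‖ < ε) ∧
        (∀ i, ‖y i * y i‖ < ε) ∧
        (∀ i, e * cs i = 0) ∧
        (∀ i, (es i + cs i) * es i = es i) ∧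
        (∀ i j, i ≠ j → cs i * cs j = 0) := by
  intro b _ _ ε hε hε1
  let _ := CStarAlgebra.spectralOrder A
  have _ := CStarAlgebra.spectralOrderedRing A
  have hsa n : IsSelfAdjoint (f n) :=
    (CStarAlgebra.nonneg_iff_eq_star_mul_self.mpr (hfpos n)).isSelfAdjoint
  exact exists_witnesses_of_monotone_chain B (g := fun n => f n * f n)
    (fun n => mul_mem (hfB n) (hfB n)) (fun n => (hsa n).mul_self_nonneg)
    (fun n => norm_mul_le_one (hfnorm n) (hfnorm n)) (mul_self_mul_succ_eq hfchain)
    (monotone_mul_self hfchain hsa hfnorm) (tendsto_norm_mul_self_mul_sub_self hfnorm hfapprox)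
    (fun b hb => hstable b (CStarAlgebra.nonneg_iff_eq_star_mul_self.mp hb)) d b hε hε1

/-- (Lemma 8.2, "only if" direction.) Let `A` be a C*-algebra, `B ⊆ A` a
C*-subalgebra containing an approximate identity `(fₙ)` of `A` with `fₙ fₙ₊₁ = fₙ`. If `A`
satisfies the Hjelmborg–Rørdam local characterization of stability, then for every positive
`b ∈ B` and `0 < ε < 1` there exist positive contractions `e, e₀, …, e_d, c₀, …, c_d ∈ B`
and `y₀, …, y_d ∈ A` satisfying the listed relations. -/
theorem stable_witnesses_in_subalgebra
    {A : Type*} [NonUnitalCStarAlgebra A]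
    (B : NonUnitalStarSubalgebra ℂ A) (hB : IsClosed (B : Set A))
    (f : ℕ → A) (hfB : ∀ n, f n ∈ B)
    (hfpos : ∀ n, ∃ x : A, f n = star x * x) (hfnorm : ∀ n, ‖f n‖ ≤ 1)
    (hfchain : ∀ n, f n * f (n + 1) = f n)
    (hfapprox : ∀ a : A, Tendsto (fun n => ‖f n * a - a‖) atTop (nhds 0))
    (hstable : ∀ b : A, (∃ x : A, b = star x * x) →
      ∀ δ : ℝ, 0 < δ → ∃ y : A, ‖y * star y - b‖ < δ ∧ ‖y * y‖ < δ)
    (d : ℕ) :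
    ∀ b ∈ B, (∃ x : A, b = star x * x) → ∀ ε : ℝ, 0 < ε → ε < 1 →
      ∃ e : A, ∃ es cs y : Fin (d + 1) → A,
        (e ∈ B ∧ (∃ x : A, e = star x * x) ∧ ‖e‖ ≤ 1) ∧
        (∀ i, es i ∈ B ∧ (∃ x : A, es i = star x * x) ∧ ‖es i‖ ≤ 1) ∧
        (∀ i, cs i ∈ B ∧ (∃ x : A, cs i = star x * x) ∧ ‖cs i‖ ≤ 1) ∧
        ‖e * b - b‖ < ε ∧
        (∀ i, es i * e = e) ∧
        (∀ i, ‖y i * star (y i) - es i‖ < ε) ∧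
        (∀ i, ‖star (y i) * y i * cs i - star (y i) * y i‖ < ε) ∧
        (∀ i, ‖y i * y i‖ < ε) ∧
        (∀ i, e * cs i = 0) ∧
        (∀ i, (es i + cs i) * es i = es i) ∧
        (∀ i j, i ≠ j → cs i * cs j = 0) :=
  stable_witnesses_in_subalgebra_general B f hfB hfpos hfnorm hfchain hfapprox hstable d
end

section
/- Let A be a (not necessarily unital) C*-algebra, let B be a C*-subalgebra of A, and let (f_n)_{n∈ℕ} be a sequence in B with 0 ≤ f_n, ‖f_n‖ ≤ 1, f_n f_{n+1} = f_n for all n, and ‖f_n a − a‖ → 0 and ‖a f_n − a‖ → 0 as n → ∞ for every a ∈ A. Let d ∈ ℕ, and suppose that for every positive element b ∈ B and every ε > 0 there exist positive contractions e, e₀, …, e_d, c₀, …, c_d ∈ B and elements y₀, …, y_d ∈ A such that for all i, j ∈ {0, …, d}: ‖e b − b‖ < ε, e_i e = e, ‖y_i y_i* − e_i‖ < ε, ‖y_i* y_i c_i − y_i* y_i‖ < ε, ‖y_i²‖ < ε, e c_i = 0, (e_i + c_i) e_i = e_i, and c_i c_j = 0 whenever i ≠ j. Then for every positive element b ∈ A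 and every ε > 0 there exists y ∈ A with ‖y y* − b‖ < ε and ‖y²‖ < ε. -/
/-!
Write `b = s * s` with `s` self-adjoint, pick `n` with `fₙ s ≈ s`, and apply the hypothesis
to `fₙ`. Then `e s ≈ s`, hence `e₀ s ≈ s` because `e₀ e = e`, while `c₀ s ≈ c₀ e s = 0`.
The element `s y₀` works: `(s y₀)(s y₀)* = s (y₀ y₀*) s ≈ s e₀ s ≈ b`, and
`(s y₀)² = s (y₀ s) y₀` is small since `y₀ ≈ y₀ c₀` (the C*-identity applied to
`y₀* y₀ c₀ ≈ y₀* y₀`) and `c₀ s ≈ 0`.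
-/

open Filter

theorem exists_pos_le_one_mul_lt {α : Type*} [Semifield α] [LinearOrder α]
    [IsStrictOrderedRing α] {ε : α} (hε : 0 < ε) {C : α} (hC : 0 ≤ C) :
    ∃ η : α, 0 < η ∧ η ≤ 1 ∧ C * η < ε := by
  obtain ⟨c, hc₀, hcε⟩ := exists_pos_mul_lt hε C
  exact ⟨min 1 c, lt_min one_pos hc₀, min_le_left 1 c,
    (mul_le_mul_of_nonneg_left (min_le_right 1 c) hC).trans_lt hcε⟩

theorem IsSelfAdjoint.mul_eq_zero_comm {R : Type*} [NonUnitalSemiring R] [StarRing R] {a b : R}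
    (ha : IsSelfAdjoint a) (hb : IsSelfAdjoint b) : a * b = 0 ↔ b * a = 0 := by
  constructor <;> intro h <;> rw [← ha.star_eq, ← hb.star_eq, ← star_mul, h, star_zero]

section NormedRing

variable {R : Type*} [NonUnitalSeminormedRing R]

theorem norm_mul_le_of_norm_le_one {c : R} (hc : ‖c‖ ≤ 1) (x : R) : ‖c * x‖ ≤ ‖x‖ :=
  (norm_mul_le c x).trans (mul_le_of_le_one_left (norm_nonneg x) hc)

theorem norm_mul_sub_le_of_norm_le_one {e f a : R} {δ : ℝ} (he : ‖e‖ ≤ 1)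
    (hfa : ‖f * a - a‖ ≤ δ) (hef : ‖e * f - f‖ ≤ δ) : ‖e * a - a‖ ≤ δ * (‖a‖ + 2) := by
  have hsplit : e * a - a = e * (a - f * a) + (e * f - f) * a + (f * a - a) := by noncomm_ring
  have h₁ : ‖e * (a - f * a)‖ ≤ ‖f * a - a‖ :=
    norm_sub_rev a (f * a) ▸ norm_mul_le_of_norm_le_one he _
  have h₂ : ‖(e * f - f) * a‖ ≤ δ * ‖a‖ :=
    (norm_mul_le _ _).trans (mul_le_mul_of_nonneg_right hef (norm_nonneg a))
  rw [hsplit]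
  linarith [norm_add₃_le (a := e * (a - f * a)) (b := (e * f - f) * a) (c := f * a - a)]

theorem norm_mul_sub_le_of_mul_eq {p e a : R} (hp : ‖p‖ ≤ 1) (hpe : p * e = e) :
    ‖p * a - a‖ ≤ 2 * ‖e * a - a‖ := by
  have hsplit : p * a - a = p * (a - e * a) + (e * a - a) := by
    rw [mul_sub, ← mul_assoc, hpe]; abel
  have h₁ : ‖p * (a - e * a)‖ ≤ ‖e * a - a‖ :=
    norm_sub_rev a (e * a) ▸ norm_mul_le_of_norm_le_one hp _
  rw [hsplit]
  linarith [norm_add_le (p * (a - e * a)) (e * a - a)]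

theorem norm_mul_le_of_mul_eq_zero {c e a : R} (hc : ‖c‖ ≤ 1) (hce : c * e = 0) :
    ‖c * a‖ ≤ ‖e * a - a‖ := by
  have : c * a = c * (a - e * a) := by rw [mul_sub, ← mul_assoc, hce, zero_mul, sub_zero]
  rw [this, norm_sub_rev (e * a)]
  exact norm_mul_le_of_norm_le_one hc _

theorem norm_mul_mul_star_sub_mul_self_le [StarRing R] {s p e y : R} {r η : ℝ}
    (hs : IsSelfAdjoint s) (hsr : ‖s‖ ≤ r)
    (hη₀ : 0 ≤ η) (hη₁ : η ≤ 1) (hp : ‖p‖ ≤ 1) (hpe : p * e = e) (hes : ‖e * s - s‖ ≤ η * r)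
    (hyp : ‖y * star y - p‖ ≤ η ^ 2) :
    ‖s * y * star (s * y) - s * s‖ ≤ 3 * r ^ 2 * η := by
  have hsplit : s * y * star (s * y) - s * s = s * (y * star y - p) * s + s * (p * s - s) := by
    rw [star_mul, hs.star_eq]; noncomm_ring
  have hr : 0 ≤ r := (norm_nonneg s).trans hsr
  calc ‖s * y * star (s * y) - s * s‖
      ≤ ‖s‖ * ‖y * star y - p‖ * ‖s‖ + ‖s‖ * ‖p * s - s‖ := by
        rw [hsplit]
        exact (norm_add_le _ _).trans (add_le_add (norm_mul₃_le ..) (norm_mul_le ..))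
    _ ≤ r * η ^ 2 * r + r * (2 * (η * r)) := by
        gcongr
        exact (norm_mul_sub_le_of_mul_eq hp hpe).trans (by gcongr)
    _ ≤ 3 * r ^ 2 * η := by nlinarith [mul_nonneg hη₀ (sub_nonneg.mpr hη₁), sq_nonneg r]

end NormedRing

section CStarRing

variable {A : Type*} [NonUnitalNormedRing A] [StarRing A] [CStarRing A]

theorem norm_sq_le_norm_mul_star_sub_add (y p : A) : ‖y‖ ^ 2 ≤ ‖y * star y - p‖ + ‖p‖ := by
  rw [sq, ← CStarRing.norm_self_mul_star, add_comm]
  exact norm_le_norm_add_norm_sub' _ _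

theorem norm_sub_mul_sq_le {c : A} (hc : IsSelfAdjoint c) (hc₁ : ‖c‖ ≤ 1) (y : A) :
    ‖y - y * c‖ ^ 2 ≤ 2 * ‖star y * y * c - star y * y‖ := by
  have hexp : star (y - y * c) * (y - y * c) =
      c * (star y * y * c - star y * y) - (star y * y * c - star y * y) := by
    rw [star_sub, star_mul, hc.star_eq]; noncomm_ring
  rw [sq, ← CStarRing.norm_star_mul_self, hexp]
  calc _ ≤ ‖c * (star y * y * c - star y * y)‖ + ‖star y * y * c - star y * y‖ := norm_sub_le _ _
    _ ≤ _ := by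
      linarith [norm_mul_le_of_norm_le_one hc₁ (star y * y * c - star y * y)]

variable {s p e c y : A} {r η : ℝ}

theorem norm_mul_mul_self_le (hsr : ‖s‖ ≤ r) (hη₀ : 0 ≤ η) (hη₁ : η ≤ 1) (hp : ‖p‖ ≤ 1)
    (hc : IsSelfAdjoint c) (hc₁ : ‖c‖ ≤ 1) (hce : c * e = 0) (hes : ‖e * s - s‖ ≤ η * r)
    (hyp : ‖y * star y - p‖ ≤ η ^ 2) (hyc : ‖star y * y * c - star y * y‖ ≤ η ^ 2) :
    ‖s * y * (s * y)‖ ≤ 8 * r ^ 2 * η := by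
  have hy : ‖y‖ ≤ 2 := by
    nlinarith [norm_sq_le_norm_mul_star_sub_add y p, norm_nonneg y]
  have hyc' : ‖y - y * c‖ ≤ 2 * η := by
    nlinarith [norm_sub_mul_sq_le hc hc₁ y, norm_nonneg (y - y * c)]
  have hcs := norm_mul_le_of_mul_eq_zero (a := s) hc₁ hce
  have hys : ‖y * s‖ ≤ 4 * η * r := by
    have hsplit : y * s = (y - y * c) * s + y * (c * s) := by noncomm_ring
    calc ‖y * s‖ ≤ ‖y - y * c‖ * ‖s‖ + ‖y‖ * ‖c * s‖ := by
          rw [hsplit]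
          exact (norm_add_le _ _).trans (add_le_add (norm_mul_le ..) (norm_mul_le ..))
      _ ≤ 2 * η * r + 2 * (η * r) := by gcongr; exact hcs.trans hes
      _ = 4 * η * r := by ring
  calc ‖s * y * (s * y)‖ = ‖s * (y * s) * y‖ := by noncomm_ring
    _ ≤ ‖s‖ * ‖y * s‖ * ‖y‖ := norm_mul₃_le ..
    _ ≤ r * (4 * η * r) * 2 := by
        have hr : 0 ≤ r := (norm_nonneg s).trans hsr
        gcongr
    _ = 8 * r ^ 2 * η := by ring

end CStarRing

theorem exists_isSelfAdjoint_mul_self_eq_star_mul_self {A : Type*} [NonUnitalCStarAlgebra A]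
    (x : A) : ∃ s : A, IsSelfAdjoint s ∧ s * s = star x * x := by
  let _ := CStarAlgebra.spectralOrder A
  have _ := CStarAlgebra.spectralOrderedRing A
  obtain ⟨s, hs, hx⟩ :=
    CStarAlgebra.nonneg_iff_exists_isSelfAdjoint_and_eq_mul_self.mp (star_mul_self_nonneg x)
  exact ⟨s, hs, hx.symm⟩

theorem stable_of_witnesses_in_subalgebra_general
    {A : Type*} [NonUnitalCStarAlgebra A]
    (B : NonUnitalStarSubalgebra ℂ A)
    (f : ℕ → A) (hfB : ∀ n, f n ∈ B)
    (hfpos : ∀ n, ∃ x : A, f n = star x * x)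
    (hfapprox : ∀ a : A, Tendsto (fun n => ‖f n * a - a‖) atTop (nhds 0))
    (d : ℕ)
    (hwit : ∀ b ∈ B, (∃ x : A, b = star x * x) → ∀ ε : ℝ, 0 < ε →
      ∃ e : A, ∃ es cs y : Fin (d + 1) → A,
        (e ∈ B ∧ (∃ x : A, e = star x * x) ∧ ‖e‖ ≤ 1) ∧
        (∀ i, es i ∈ B ∧ (∃ x : A, es i = star x * x) ∧ ‖es i‖ ≤ 1) ∧
        (∀ i, cs i ∈ B ∧ (∃ x : A, cs i = star x * x) ∧ ‖cs i‖ ≤ 1) ∧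
        ‖e * b - b‖ < ε ∧
        (∀ i, es i * e = e) ∧
        (∀ i, ‖y i * star (y i) - es i‖ < ε) ∧
        (∀ i, ‖star (y i) * y i * cs i - star (y i) * y i‖ < ε) ∧
        (∀ i, ‖y i * y i‖ < ε) ∧
        (∀ i, e * cs i = 0) ∧
        (∀ i, (es i + cs i) * es i = es i) ∧
        (∀ i j, i ≠ j → cs i * cs j = 0)) :
    ∀ b : A, (∃ x : A, b = star x * x) → ∀ ε : ℝ, 0 < ε →
      ∃ y : A, ‖y * star y - b‖ < ε ∧ ‖y * y‖ < ε := by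
  rintro _ ⟨x, rfl⟩ ε hε
  obtain ⟨s, hs, hss⟩ := exists_isSelfAdjoint_mul_self_eq_star_mul_self x
  rw [← hss]
  set r := ‖s‖ + 2
  have hsr : ‖s‖ ≤ r := le_add_of_nonneg_right zero_le_two
  have hr₀ : 0 < r := add_pos_of_nonneg_of_pos (norm_nonneg s) two_pos
  obtain ⟨η, hη₀, hη₁, hηε⟩ := exists_pos_le_one_mul_lt hε (by positivity : 0 ≤ 8 * r ^ 2)
  -- tolerance `η ^ 2`: the C*-identity halves exponents, so the final bounds are linear in `η`
  obtain ⟨m, hm⟩ := ((hfapprox s).eventually (gt_mem_nhds (pow_pos hη₀ 2))).exists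
  obtain ⟨e, es, cs, y, ⟨-, ⟨u, hu⟩, he₁⟩, hp, hc, hef, hpe, hyp, hyc, -, hec, -, -⟩ :=
    hwit (f m) (hfB m) (hfpos m) (η ^ 2) (pow_pos hη₀ 2)
  obtain ⟨-, -, hp₁⟩ := hp 0
  obtain ⟨-, ⟨v, hv⟩, hc₁⟩ := hc 0
  have hc_sa : IsSelfAdjoint (cs 0) := hv ▸ .star_mul_self v
  have he_sa : IsSelfAdjoint e := hu ▸ .star_mul_self u
  have hce : cs 0 * e = 0 := (he_sa.mul_eq_zero_comm hc_sa).mp (hec 0)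
  have hes : ‖e * s - s‖ ≤ η * r :=
    (norm_mul_sub_le_of_norm_le_one he₁ hm.le hef.le).trans
      (mul_le_mul_of_nonneg_right (sq_le hη₀.le hη₁) hr₀.le)
  refine ⟨s * y 0, ?_, ?_⟩
  · refine (norm_mul_mul_star_sub_mul_self_le hs hsr hη₀.le hη₁ hp₁ (hpe 0) hes
      (hyp 0).le).trans_lt ?_
    linarith [mul_pos (pow_pos hr₀ 2) hη₀]
  · exact (norm_mul_mul_self_le hsr hη₀.le hη₁ hp₁ hc_sa hc₁ hce hes (hyp 0).le
      (hyc 0).le).trans_lt hηε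

/-- (Lemma 8.2, "if" direction.) Let `A` be a C*-algebra, `B ⊆ A` a
C*-subalgebra containing an approximate identity `(fₙ)` of `A` with `fₙ fₙ₊₁ = fₙ`. If for
every positive `b ∈ B` and `ε > 0` there exist positive contractions
`e, e₀, …, e_d, c₀, …, c_d ∈ B` and `y₀, …, y_d ∈ A` satisfying the listed relations, then
`A` satisfies the Hjelmborg–Rørdam local characterization of stability. -/
theorem stable_of_witnesses_in_subalgebra
    {A : Type*} [NonUnitalCStarAlgebra A]
    (B : NonUnitalStarSubalgebra ℂ A) (hB : IsClosed (B : Set A))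
    (f : ℕ → A) (hfB : ∀ n, f n ∈ B)
    (hfpos : ∀ n, ∃ x : A, f n = star x * x) (hfnorm : ∀ n, ‖f n‖ ≤ 1)
    (hfchain : ∀ n, f n * f (n + 1) = f n)
    (hfapprox : ∀ a : A, Tendsto (fun n => ‖f n * a - a‖) atTop (nhds 0))
    (hfapprox' : ∀ a : A, Tendsto (fun n => ‖a * f n - a‖) atTop (nhds 0))
    (d : ℕ)
    (hwit : ∀ b ∈ B, (∃ x : A, b = star x * x) → ∀ ε : ℝ, 0 < ε →
      ∃ e : A, ∃ es cs y : Fin (d + 1) → A,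
        (e ∈ B ∧ (∃ x : A, e = star x * x) ∧ ‖e‖ ≤ 1) ∧
        (∀ i, es i ∈ B ∧ (∃ x : A, es i = star x * x) ∧ ‖es i‖ ≤ 1) ∧
        (∀ i, cs i ∈ B ∧ (∃ x : A, cs i = star x * x) ∧ ‖cs i‖ ≤ 1) ∧
        ‖e * b - b‖ < ε ∧
        (∀ i, es i * e = e) ∧
        (∀ i, ‖y i * star (y i) - es i‖ < ε) ∧
        (∀ i, ‖star (y i) * y i * cs i - star (y i) * y i‖ < ε) ∧
        (∀ i, ‖y i * y i‖ < ε) ∧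
        (∀ i, e * cs i = 0) ∧
        (∀ i, (es i + cs i) * es i = es i) ∧
        (∀ i j, i ≠ j → cs i * cs j = 0)) :
    ∀ b : A, (∃ x : A, b = star x * x) → ∀ ε : ℝ, 0 < ε →
      ∃ y : A, ‖y * star y - b‖ < ε ∧ ‖y * y‖ < ε :=
  stable_of_witnesses_in_subalgebra_general B f hfB hfpos hfapprox d hwit
end
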